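/- arXiv:2103.15276 — 11 statements merged into one kernel-verified Lean document; each statement's English description precedes it below -/
import Mathlib

section
/- Under the propagator setup, suppose g : [0,∞) → X is continuous, u₀ ∈ X, and u : [0,∞) → X is differentiable with u(0) = u₀ and u'(t) = B(t)(u(t)) + g(t) for all t ≥ 0. Then for every t ≥ 0, u(t) = U(t)(u₀) + U(t)(∫₀ᵗ V(ξ)(g(ξ)) dξ). -/
open MeasureTheory Filter
open scoped ENNReal

theorem stmt1 {X : Type*} [NormedAddCommGroup X] [NormedSpace ℝ X] [CompleteSpace X]
    (B U V : ℝ → X →L[ℝ] X)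
    (hB : Continuous B)
    (hU0 : U 0 = 1) (hV0 : V 0 = 1)
    (hVU : ∀ t, 0 ≤ t → (V t).comp (U t) = 1)
    (hUV : ∀ t, 0 ≤ t → (U t).comp (V t) = 1)
    (hUd : ∀ t, 0 ≤ t → HasDerivAt U ((B t).comp (U t)) t)
    (hVd : ∀ t, 0 ≤ t → HasDerivAt V (-((V t).comp (B t))) t)
    (g : ℝ → X) (hg : ContinuousOn g (Set.Ici 0))
    (u : ℝ → X) (u₀ : X) (hu0 : u 0 = u₀)
    (hud : ∀ t, 0 ≤ t → HasDerivAt u (B t (u t) + g t) t) :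
    ∀ t, 0 ≤ t → u t = U t u₀ + U t (∫ ξ in (0:ℝ)..t, V ξ (g ξ)) := by
  intro t ht
  have hVcont : ContinuousOn V (Set.Ici 0) :=
    fun s hs => (hVd s hs).continuousAt.continuousWithinAt
  have hint : ContinuousOn (fun ξ => V ξ (g ξ)) (Set.Ici 0) :=
    hVcont.clm_apply hg
  have hwd : ∀ s, 0 ≤ s → HasDerivAt (fun ξ => V ξ (u ξ)) (V s (g s)) s := by
    intro s hs
    have := ((hVd s hs).clm_apply (hud s hs))
    simpa [map_add] using this
  have hsub : Set.uIcc (0:ℝ) t ⊆ Set.Ici 0 := by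
    rw [Set.uIcc_of_le ht]
    exact fun x hx => hx.1
  have key : (∫ ξ in (0:ℝ)..t, V ξ (g ξ)) = V t (u t) - V 0 (u 0) := by
    apply intervalIntegral.integral_eq_sub_of_hasDerivAt
    · intro s hs
      exact hwd s (hsub hs)
    · exact (hint.mono hsub).intervalIntegrable
  have hVtu : V t (u t) = u₀ + ∫ ξ in (0:ℝ)..t, V ξ (g ξ) := by
    rw [key, hu0, hV0]
    simp
  have : U t (V t (u t)) = u t := by
    have := hUV t ht
    calc U t (V t (u t)) = ((U t).comp (V t)) (u t) := rfl
      _ = u t := by rw [this]; rfl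
  rw [← this, hVtu, map_add]
end

section
/- Under the propagator setup and the solution setup, for every t ∈ [0,T) one has ‖u(t)‖ ≤ ‖U(t)‖·‖u₀‖ + ∫₀ᵗ ‖U(t)∘V(ξ)‖·(α(ξ)·‖u(ξ)‖^p + β(ξ)) dξ. -/
open MeasureTheory Filter
open scoped ENNReal

theorem stmt2
    {X : Type*} [NormedAddCommGroup X] [NormedSpace ℝ X] [CompleteSpace X]
    (B U V : ℝ → X →L[ℝ] X)
    (hB : Continuous B)
    (hU0 : U 0 = 1) (hV0 : V 0 = 1)
    (hVU : ∀ t, 0 ≤ t → (V t).comp (U t) = 1)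
    (hUV : ∀ t, 0 ≤ t → (U t).comp (V t) = 1)
    (hUd : ∀ t, 0 ≤ t → HasDerivAt U ((B t).comp (U t)) t)
    (hVd : ∀ t, 0 ≤ t → HasDerivAt V (-((V t).comp (B t))) t)
    (p : ℝ) (hp : 1 < p)
    (α β : ℝ → ℝ) (hαc : Continuous α) (hβc : Continuous β)
    (hα0 : ∀ t, 0 ≤ α t) (hβ0 : ∀ t, 0 ≤ β t)
    (T : ℝ≥0∞) (hT : 0 < T)
    (u G f : ℝ → X) (u₀ : X) (hu0 : u 0 = u₀)
    (hGc : ContinuousOn G {t : ℝ | 0 ≤ t ∧ ENNReal.ofReal t < T})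
    (hfc : ContinuousOn f {t : ℝ | 0 ≤ t ∧ ENNReal.ofReal t < T})
    (hud : ∀ t, 0 ≤ t → ENNReal.ofReal t < T → HasDerivAt u (B t (u t) + G t + f t) t)
    (hGb : ∀ t, 0 ≤ t → ENNReal.ofReal t < T → ‖G t‖ ≤ α t * ‖u t‖ ^ p)
    (hfb : ∀ t, 0 ≤ t → ENNReal.ofReal t < T → ‖f t‖ ≤ β t)
    :
    ∀ t, 0 ≤ t → ENNReal.ofReal t < T →
      ‖u t‖ ≤ ‖U t‖ * ‖u₀‖ +
        ∫ ξ in (0:ℝ)..t, ‖(U t).comp (V ξ)‖ * (α ξ * ‖u ξ‖ ^ p + β ξ) := by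
  intro t ht0 htT
  have hmem : ∀ s ∈ Set.Icc (0:ℝ) t, 0 ≤ s ∧ ENNReal.ofReal s < T := fun s hs =>
    ⟨hs.1, lt_of_le_of_lt (ENNReal.ofReal_le_ofReal hs.2) htT⟩
  have hIcc : Set.uIcc (0:ℝ) t = Set.Icc 0 t := Set.uIcc_of_le ht0
  have hVcont : ContinuousOn V (Set.Icc 0 t) := fun s hs =>
    ((hVd s hs.1).continuousAt).continuousWithinAt
  have hucont : ContinuousOn u (Set.Icc 0 t) := fun s hs =>
    ((hud s (hmem s hs).1 (hmem s hs).2).continuousAt).continuousWithinAt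
  have hsub : Set.Icc (0:ℝ) t ⊆ {s : ℝ | 0 ≤ s ∧ ENNReal.ofReal s < T} := fun s hs => hmem s hs
  have hGcont : ContinuousOn G (Set.Icc 0 t) := hGc.mono hsub
  have hfcont : ContinuousOn f (Set.Icc 0 t) := hfc.mono hsub
  have hφcont : ContinuousOn (fun ξ => V ξ (G ξ + f ξ)) (Set.Icc 0 t) :=
    hVcont.clm_apply (hGcont.add hfcont)
  have hφint : IntervalIntegrable (fun ξ => V ξ (G ξ + f ξ)) volume 0 t :=
    (hIcc ▸ hφcont).intervalIntegrable
  have hderiv : ∀ s ∈ Set.uIcc (0:ℝ) t,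
      HasDerivAt (fun τ => V τ (u τ)) (V s (G s + f s)) s := by
    intro s hs
    rw [hIcc] at hs
    obtain ⟨hs0, hsT⟩ := hmem s hs
    have h1 := (hVd s hs0).clm_apply (hud s hs0 hsT)
    convert h1 using 1
    simp only [ContinuousLinearMap.neg_apply, ContinuousLinearMap.comp_apply, map_add]
    abel
  have hftc := intervalIntegral.integral_eq_sub_of_hasDerivAt hderiv hφint
  simp only [hV0, hu0, ContinuousLinearMap.one_apply] at hftc
  have hut : u t = U t u₀ + ∫ ξ in (0:ℝ)..t, ((U t).comp (V ξ)) (G ξ + f ξ) := by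
    have h2 : U t (V t (u t)) = u t := by
      have h3 := hUV t ht0
      have : ((U t).comp (V t)) (u t) = u t := by rw [h3]; rfl
      simpa using this
    have h4 : V t (u t) = u₀ + ∫ ξ in (0:ℝ)..t, V ξ (G ξ + f ξ) := by
      rw [hftc]; abel
    have h5 : (∫ ξ in (0:ℝ)..t, ((U t).comp (V ξ)) (G ξ + f ξ)) =
        U t (∫ ξ in (0:ℝ)..t, V ξ (G ξ + f ξ)) :=
      (U t).intervalIntegral_comp_comm hφint
    rw [← h2, h4, map_add, h5]
  have hψcont : ContinuousOn (fun ξ => ((U t).comp (V ξ)) (G ξ + f ξ)) (Set.Icc 0 t) := by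
    have : ContinuousOn (fun ξ => (U t).comp (V ξ)) (Set.Icc 0 t) :=
      (ContinuousLinearMap.compL ℝ X X X (U t)).continuous.comp_continuousOn hVcont
    exact this.clm_apply (hGcont.add hfcont)
  have hgcont : ContinuousOn
      (fun ξ => ‖(U t).comp (V ξ)‖ * (α ξ * ‖u ξ‖ ^ p + β ξ)) (Set.Icc 0 t) := by
    have h1 : ContinuousOn (fun ξ => ‖(U t).comp (V ξ)‖) (Set.Icc 0 t) :=
      ((ContinuousLinearMap.compL ℝ X X X (U t)).continuous.comp_continuousOn hVcont).norm
    have h2 : ContinuousOn (fun ξ => ‖u ξ‖ ^ p) (Set.Icc 0 t) :=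
      hucont.norm.rpow_const (fun x _ => Or.inr (le_of_lt (lt_trans one_pos hp)))
    exact h1.mul ((hαc.continuousOn.mul h2).add hβc.continuousOn)
  have hbound : ∀ s ∈ Set.Icc (0:ℝ) t,
      ‖((U t).comp (V s)) (G s + f s)‖ ≤ ‖(U t).comp (V s)‖ * (α s * ‖u s‖ ^ p + β s) := by
    intro s hs
    obtain ⟨hs0, hsT⟩ := hmem s hs
    refine le_trans (ContinuousLinearMap.le_opNorm _ _) ?_
    refine mul_le_mul_of_nonneg_left ?_ (norm_nonneg _)
    exact le_trans (norm_add_le _ _) (add_le_add (hGb s hs0 hsT) (hfb s hs0 hsT))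
  rw [hut]
  refine le_trans (norm_add_le _ _) (add_le_add ((U t).le_opNorm u₀) ?_)
  calc ‖∫ ξ in (0:ℝ)..t, ((U t).comp (V ξ)) (G ξ + f ξ)‖
      ≤ ∫ ξ in (0:ℝ)..t, ‖((U t).comp (V ξ)) (G ξ + f ξ)‖ :=
        intervalIntegral.norm_integral_le_integral_norm ht0
    _ ≤ ∫ ξ in (0:ℝ)..t, ‖(U t).comp (V ξ)‖ * (α ξ * ‖u ξ‖ ^ p + β ξ) := by
        refine intervalIntegral.integral_mono_on ht0 ?_ ?_ ?_
        · exact (hIcc ▸ hψcont.norm).intervalIntegrable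
        · exact (hIcc ▸ hgcont).intervalIntegrable
        · exact hbound
end

section
/- (Quantitative form of Theorem 2.1.) Under the propagator setup and the solution setup, assume S := sup_{t≥0} ‖U(t)‖ < ∞ and M := sup_{t≥0} ∫₀ᵗ ‖U(t)∘V(ξ)‖·α(ξ) dξ satisfies 0 < M < ∞. Let ε > 0 satisfy ε^{p−1}·M < 1/4, and assume ‖u₀‖·S < ε/4, ‖u₀‖ < ε, and β(t) ≤ ε·α(t)/(4M) for all t ≥ 0. Then ‖u(t)‖ ≤ ε for all t ∈ [0,T). -/
/-!
By Duhamel's formula `u t = U t u₀ + ∫₀ᵗ U t (V ξ) (G ξ + f ξ) dξ`. As long as `‖u‖ ≤ ε` on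
`[0, t]`, the forcing satisfies `‖G ξ + f ξ‖ ≤ (ε ^ p + ε / (4M)) α ξ`, so the integral term is at
most `ε ^ p M + ε / 4 ≤ ε / 2` and the free term at most `S ‖u₀‖ < ε / 4`; hence `‖u t‖ < ε`.
A continuity argument turns this bootstrap estimate into `‖u‖ < ε` on all of `[0, T)`.
-/

open MeasureTheory Set
open scoped ENNReal

theorem forall_lt_of_continuousOn_of_forall_le_imp_lt {φ : ℝ → ℝ} {a b ε : ℝ}
    (hφ : ContinuousOn φ (Icc a b)) (ha : φ a ≤ ε)
    (hstep : ∀ t ∈ Icc a b, (∀ s ∈ Icc a t, φ s ≤ ε) → φ t < ε) :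
    ∀ t ∈ Icc a b, φ t < ε := by
  by_contra! ⟨t₀, ht₀, hεt₀⟩
  set K := Icc a b ∩ φ ⁻¹' Ici ε
  have hK : IsCompact K :=
    isCompact_Icc.of_isClosed_subset (hφ.preimage_isClosed_of_isClosed isClosed_Icc isClosed_Ici)
      inter_subset_left
  obtain ⟨t₁, ⟨ht₁, hεt₁⟩, ht₁_least⟩ := hK.exists_isLeast ⟨t₀, ht₀, hεt₀⟩
  have hbefore : ∀ s ∈ Ico a t₁, φ s < ε := fun s hs =>
    lt_of_not_ge fun hεs => (hs.2.trans_le (ht₁_least ⟨⟨hs.1, hs.2.le.trans ht₁.2⟩, hεs⟩)).false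
  have hφt₁ : φ t₁ = ε := by
    obtain ⟨c, hc, hφc⟩ := intermediate_value_Icc ht₁.1 (hφ.mono (Icc_subset_Icc_right ht₁.2))
      ⟨ha, hεt₁⟩
    obtain rfl : c = t₁ := le_antisymm hc.2
      (ht₁_least ⟨⟨hc.1, hc.2.trans ht₁.2⟩, hφc.ge⟩)
    exact hφc
  refine (hstep t₁ ht₁ fun s hs => ?_).ne hφt₁
  rcases hs.2.lt_or_eq with hlt | rfl
  · exact (hbefore s ⟨hs.1, hlt⟩).le
  · exact hφt₁.le

section

variable {X Y : Type*} [NormedAddCommGroup X] [NormedSpace ℝ X]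
  [NormedAddCommGroup Y] [NormedSpace ℝ Y]

theorem norm_intervalIntegral_clm_apply_le {W : ℝ → X →L[ℝ] Y} {g : ℝ → X} {α : ℝ → ℝ}
    {a b C : ℝ} (hab : a ≤ b) (hW : ContinuousOn W (Icc a b)) (hα : ContinuousOn α (Icc a b))
    (hg : ∀ ξ ∈ Ioc a b, ‖g ξ‖ ≤ C * α ξ) :
    ‖∫ ξ in a..b, W ξ (g ξ)‖ ≤ C * ∫ ξ in a..b, ‖W ξ‖ * α ξ := by
  rw [← intervalIntegral.integral_const_mul]
  refine intervalIntegral.norm_integral_le_of_norm_le hab (ae_of_all _ fun ξ hξ => ?_)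
    ((continuousOn_const.mul (hW.norm.mul hα)).intervalIntegrable_of_Icc hab)
  calc ‖W ξ (g ξ)‖ ≤ ‖W ξ‖ * ‖g ξ‖ := (W ξ).le_opNorm _
    _ ≤ ‖W ξ‖ * (C * α ξ) := mul_le_mul_of_nonneg_left (hg ξ hξ) (norm_nonneg _)
    _ = C * (‖W ξ‖ * α ξ) := by ring

variable [CompleteSpace Y]

theorem propagator_apply_eq_add_integral {B : ℝ → X →L[ℝ] X} {V : ℝ → X →L[ℝ] Y}
    {u g : ℝ → X} {a b : ℝ} (hab : a ≤ b)
    (hVd : ∀ s ∈ Icc a b, HasDerivAt V (-((V s).comp (B s))) s)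
    (hud : ∀ s ∈ Icc a b, HasDerivAt u (B s (u s) + g s) s) (hg : ContinuousOn g (Icc a b)) :
    V b (u b) = V a (u a) + ∫ ξ in a..b, V ξ (g ξ) := by
  have hV : ContinuousOn V (Icc a b) := fun s hs => (hVd s hs).continuousAt.continuousWithinAt
  have hderiv : ∀ s ∈ uIcc a b, HasDerivAt (fun ξ => V ξ (u ξ)) (V s (g s)) s := by
    intro s hs
    rw [uIcc_of_le hab] at hs
    convert (hVd s hs).clm_apply (hud s hs) using 1
    simp only [neg_apply, ContinuousLinearMap.comp_apply, map_add]
    abel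
  rw [intervalIntegral.integral_eq_sub_of_hasDerivAt hderiv
    ((hV.clm_apply hg).intervalIntegrable_of_Icc hab), add_sub_cancel]

end

theorem norm_add_le_of_le_mul_rpow {X : Type*} [NormedAddCommGroup X] {x y : X}
    {a r ε K p : ℝ} (ha : 0 ≤ a) (hr : 0 ≤ r) (hrε : r ≤ ε) (hp : 0 ≤ p)
    (hx : ‖x‖ ≤ a * r ^ p) (hy : ‖y‖ ≤ ε * a / K) :
    ‖x + y‖ ≤ (ε ^ p + ε / K) * a := by
  have hrp : r ^ p ≤ ε ^ p := Real.rpow_le_rpow hr hrε hp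
  calc ‖x + y‖ ≤ a * r ^ p + ε * a / K := norm_add_le_of_le hx hy
    _ ≤ a * ε ^ p + ε * a / K := by gcongr
    _ = (ε ^ p + ε / K) * a := by ring

theorem rpow_add_div_mul_le_half {ε M p : ℝ} (hε : 0 < ε) (hM : 0 < M)
    (h : ε ^ (p - 1) * M < 1 / 4) :
    (ε ^ p + ε / (4 * M)) * M ≤ ε / 2 := by
  have hfirst : ε ^ p * M ≤ ε / 4 := by
    rw [← sub_add_cancel p 1, Real.rpow_add_one hε.ne']
    nlinarith
  have hsecond : ε / (4 * M) * M = ε / 4 := by field_simp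
  linarith [add_mul (ε ^ p) (ε / (4 * M)) M]

theorem duhamel_formula {X : Type*} [NormedAddCommGroup X] [NormedSpace ℝ X] [CompleteSpace X]
    {B U V : ℝ → X →L[ℝ] X} {u g : ℝ → X} {t : ℝ} (ht : 0 ≤ t)
    (hV0 : V 0 = 1) (hUV : (U t).comp (V t) = 1)
    (hVd : ∀ s ∈ Icc 0 t, HasDerivAt V (-((V s).comp (B s))) s)
    (hud : ∀ s ∈ Icc 0 t, HasDerivAt u (B s (u s) + g s) s) (hg : ContinuousOn g (Icc 0 t)) :
    u t = U t (u 0) + ∫ ξ in 0..t, (U t).comp (V ξ) (g ξ) := by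
  have hV : ContinuousOn V (Icc 0 t) := fun s hs => (hVd s hs).continuousAt.continuousWithinAt
  calc u t = U t (V t (u t)) := by rw [← ContinuousLinearMap.comp_apply, hUV]; rfl
    _ = U t (u 0) + ∫ ξ in 0..t, (U t).comp (V ξ) (g ξ) := by
      rw [propagator_apply_eq_add_integral ht hVd hud hg, hV0, map_add,
        ← (U t).intervalIntegral_comp_comm ((hV.clm_apply hg).intervalIntegrable_of_Icc ht)]
      rfl

theorem stmt3_general
    {X : Type*} [NormedAddCommGroup X] [NormedSpace ℝ X] [CompleteSpace X]
    (B U V : ℝ → X →L[ℝ] X)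
    (hV0 : V 0 = 1)
    (hUV : ∀ t, 0 ≤ t → (U t).comp (V t) = 1)
    (hVd : ∀ t, 0 ≤ t → HasDerivAt V (-((V t).comp (B t))) t)
    (p : ℝ) (hp : 1 < p)
    (α β : ℝ → ℝ) (hαc : Continuous α)
    (hα0 : ∀ t, 0 ≤ α t)
    (T : ℝ≥0∞)
    (u G f : ℝ → X) (u₀ : X) (hu0 : u 0 = u₀)
    (hGc : ContinuousOn G {t : ℝ | 0 ≤ t ∧ ENNReal.ofReal t < T})
    (hfc : ContinuousOn f {t : ℝ | 0 ≤ t ∧ ENNReal.ofReal t < T})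
    (hud : ∀ t, 0 ≤ t → ENNReal.ofReal t < T → HasDerivAt u (B t (u t) + G t + f t) t)
    (hGb : ∀ t, 0 ≤ t → ENNReal.ofReal t < T → ‖G t‖ ≤ α t * ‖u t‖ ^ p)
    (hfb : ∀ t, 0 ≤ t → ENNReal.ofReal t < T → ‖f t‖ ≤ β t)
    (S M ε : ℝ)
    (hS : ∀ t, 0 ≤ t → ‖U t‖ ≤ S)
    (hM : ∀ t, 0 ≤ t → ∫ ξ in (0:ℝ)..t, ‖(U t).comp (V ξ)‖ * α ξ ≤ M)
    (hM0 : 0 < M)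
    (hε : 0 < ε) (hεM : ε ^ (p - 1) * M < 1 / 4)
    (hu₀S : ‖u₀‖ * S < ε / 4) (hu₀ε : ‖u₀‖ < ε)
    (hβε : ∀ t, 0 ≤ t → β t ≤ ε * α t / (4 * M)) :
    ∀ t, 0 ≤ t → ENNReal.ofReal t < T → ‖u t‖ ≤ ε := by
  intro t₀ ht₀ ht₀T
  have hdom : ∀ s ∈ Icc 0 t₀, 0 ≤ s ∧ ENNReal.ofReal s < T := fun s hs =>
    ⟨hs.1, (ENNReal.ofReal_le_ofReal hs.2).trans_lt ht₀T⟩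
  have hV : ContinuousOn V (Icc 0 t₀) := fun s hs =>
    (hVd s (hdom s hs).1).continuousAt.continuousWithinAt
  have hu : ContinuousOn u (Icc 0 t₀) := fun s hs =>
    (hud s (hdom s hs).1 (hdom s hs).2).continuousAt.continuousWithinAt
  set C := ε ^ p + ε / (4 * M)
  suffices ∀ t ∈ Icc 0 t₀, ‖u t‖ < ε from (this t₀ ⟨ht₀, le_rfl⟩).le
  refine forall_lt_of_continuousOn_of_forall_le_imp_lt hu.norm (hu0 ▸ hu₀ε.le) fun t ht hsmall => ?_
  have hIcc : Icc 0 t ⊆ Icc 0 t₀ := Icc_subset_Icc_right ht.2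
  have hforce : ∀ ξ ∈ Ioc 0 t, ‖G ξ + f ξ‖ ≤ C * α ξ := fun ξ hξ => by
    obtain ⟨hξ0, hξT⟩ := hdom ξ (hIcc (Ioc_subset_Icc_self hξ))
    exact norm_add_le_of_le_mul_rpow (hα0 ξ) (norm_nonneg _) (hsmall ξ (Ioc_subset_Icc_self hξ))
      (by linarith) (hGb ξ hξ0 hξT) ((hfb ξ hξ0 hξT).trans (hβε ξ hξ0))
  have hduhamel := duhamel_formula ht.1 hV0 (hUV t ht.1) (fun s hs => hVd s (hdom s (hIcc hs)).1)
    (fun s hs => add_assoc (B s (u s)) (G s) (f s) ▸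
      hud s (hdom s (hIcc hs)).1 (hdom s (hIcc hs)).2)
    ((hGc.add hfc).mono fun s hs => hdom s (hIcc hs))
  have hintegral := norm_intervalIntegral_clm_apply_le ht.1
    ((continuousOn_const (c := U t)).clm_comp (hV.mono hIcc)) hαc.continuousOn hforce
  calc ‖u t‖ ≤ ‖U t‖ * ‖u₀‖ + C * ∫ ξ in 0..t, ‖(U t).comp (V ξ)‖ * α ξ := by
        rw [hduhamel, hu0]
        exact norm_add_le_of_le ((U t).le_opNorm u₀) hintegral
    _ ≤ S * ‖u₀‖ + C * M := by
        gcongr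
        exacts [hS t ht.1, hM t ht.1]
    _ < ε := by linarith [rpow_add_div_mul_le_half hε hM0 hεM]

theorem stmt3
    {X : Type*} [NormedAddCommGroup X] [NormedSpace ℝ X] [CompleteSpace X]
    (B U V : ℝ → X →L[ℝ] X)
    (hB : Continuous B)
    (hU0 : U 0 = 1) (hV0 : V 0 = 1)
    (hVU : ∀ t, 0 ≤ t → (V t).comp (U t) = 1)
    (hUV : ∀ t, 0 ≤ t → (U t).comp (V t) = 1)
    (hUd : ∀ t, 0 ≤ t → HasDerivAt U ((B t).comp (U t)) t)
    (hVd : ∀ t, 0 ≤ t → HasDerivAt V (-((V t).comp (B t))) t)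
    (p : ℝ) (hp : 1 < p)
    (α β : ℝ → ℝ) (hαc : Continuous α) (hβc : Continuous β)
    (hα0 : ∀ t, 0 ≤ α t) (hβ0 : ∀ t, 0 ≤ β t)
    (T : ℝ≥0∞) (hT : 0 < T)
    (u G f : ℝ → X) (u₀ : X) (hu0 : u 0 = u₀)
    (hGc : ContinuousOn G {t : ℝ | 0 ≤ t ∧ ENNReal.ofReal t < T})
    (hfc : ContinuousOn f {t : ℝ | 0 ≤ t ∧ ENNReal.ofReal t < T})
    (hud : ∀ t, 0 ≤ t → ENNReal.ofReal t < T → HasDerivAt u (B t (u t) + G t + f t) t)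
    (hGb : ∀ t, 0 ≤ t → ENNReal.ofReal t < T → ‖G t‖ ≤ α t * ‖u t‖ ^ p)
    (hfb : ∀ t, 0 ≤ t → ENNReal.ofReal t < T → ‖f t‖ ≤ β t)
    (S M ε : ℝ)
    (hS : ∀ t, 0 ≤ t → ‖U t‖ ≤ S)
    (hM : ∀ t, 0 ≤ t → ∫ ξ in (0:ℝ)..t, ‖(U t).comp (V ξ)‖ * α ξ ≤ M)
    (hM0 : 0 < M)
    (hε : 0 < ε) (hεM : ε ^ (p - 1) * M < 1 / 4)
    (hu₀S : ‖u₀‖ * S < ε / 4) (hu₀ε : ‖u₀‖ < ε)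
    (hβε : ∀ t, 0 ≤ t → β t ≤ ε * α t / (4 * M)) :
    ∀ t, 0 ≤ t → ENNReal.ofReal t < T → ‖u t‖ ≤ ε :=
  stmt3_general B U V hV0 hUV hVd p hp α β hαc hα0 T u G f u₀ hu0 hGc hfc hud hGb hfb S M ε hS hM
    hM0 hε hεM hu₀S hu₀ε hβε
end

section
/- (Nonlinear Grönwall-type lemma.) Let T ∈ (0,∞], p > 1, ω ≥ 0, let h : [0,T) → ℝ be continuous and nonnegative, and let g : [0,T) → ℝ be nonnegative and differentiable with g(0) + ω > 0 and g'(t) ≤ h(t)·(g(t) + ω)^p for all t ∈ [0,T). If (g(0) + ω)^{1−p} − (p−1)·∫₀ᵗ h(ξ) dξ > 0 for all t ∈ [0,T), then for all t ∈ [0,T): (g(t) + ω)^{p−1} ≤ 1 / ((g(0) + ω)^{1−p} − (p−1)·∫₀ᵗ h(ξ) dξ). -/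
open MeasureTheory Filter
open scoped ENNReal

private lemma gron_core (p ω : ℝ) (hp : 1 < p)
    (h g g' : ℝ → ℝ) (s t : ℝ) (hst : s ≤ t)
    (hhc : ContinuousOn h (Set.Icc s t))
    (hhn : ∀ x ∈ Set.Ioo s t, ContinuousAt h x)
    (hgd : ∀ x ∈ Set.Icc s t, HasDerivAt g (g' x) x)
    (hineq : ∀ x ∈ Set.Icc s t, g' x ≤ h x * (g x + ω) ^ p)
    (hpos : ∀ x ∈ Set.Icc s t, 0 < g x + ω) :
    (g s + ω) ^ (1 - p) - (p - 1) * ∫ ξ in s..t, h ξ ≤ (g t + ω) ^ (1 - p) := by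
  have hIcc : Set.uIcc s t = Set.Icc s t := Set.uIcc_of_le hst
  have hintOn : IntegrableOn h (Set.uIcc s t) := by
    rw [hIcc]; exact hhc.integrableOn_Icc
  set F : ℝ → ℝ := fun x => (g x + ω) ^ (1 - p) + (p - 1) * ∫ ξ in s..x, h ξ with hF
  have hcg : ContinuousOn g (Set.Icc s t) := fun x hx =>
    ((hgd x hx).continuousAt).continuousWithinAt
  have hcF : ContinuousOn F (Set.Icc s t) := by
    apply ContinuousOn.add
    · exact (hcg.add continuousOn_const).rpow_const fun x hx => Or.inl (hpos x hx).ne'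
    · refine continuousOn_const.mul ?_
      have := intervalIntegral.continuousOn_primitive_interval (a := s) (b := t) (μ := volume)
        hintOn
      rwa [hIcc] at this
  have hderivF : ∀ x ∈ Set.Ioo s t,
      HasDerivAt F (g' x * (1 - p) * (g x + ω) ^ (1 - p - 1) + (p - 1) * h x) x := by
    intro x hx
    have hx' := Set.mem_Icc_of_Ioo hx
    have h1 : HasDerivAt (fun y => (g y + ω) ^ (1 - p))
        (g' x * (1 - p) * (g x + ω) ^ (1 - p - 1)) x :=
      ((hgd x hx').add_const ω).rpow_const (Or.inl (hpos x hx').ne')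
    have hcx : ContinuousAt h x := hhn x hx
    have h2 : HasDerivAt (fun y => ∫ ξ in s..y, h ξ) (h x) x := by
      refine intervalIntegral.integral_hasDerivAt_right ?_ ?_ hcx
      · refine (hintOn.mono_set ?_).intervalIntegrable
        rw [hIcc]
        exact Set.uIcc_subset_Icc (Set.left_mem_Icc.2 hst) hx'
      · exact ⟨Set.Icc s t, Icc_mem_nhds hx.1 hx.2,
          hhc.aestronglyMeasurable measurableSet_Icc⟩
    exact h1.add (h2.const_mul (p - 1))
  have hmono : MonotoneOn F (Set.Icc s t) := by
    apply monotoneOn_of_deriv_nonneg (convex_Icc s t) hcF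
    · intro x hx
      rw [interior_Icc] at hx
      exact (hderivF x hx).differentiableAt.differentiableWithinAt
    · intro x hx
      rw [interior_Icc] at hx
      rw [(hderivF x hx).deriv]
      have hx' := Set.mem_Icc_of_Ioo hx
      have hA : 0 < g x + ω := hpos x hx'
      have hAp : 0 < (g x + ω) ^ p := Real.rpow_pos_of_pos hA p
      have hAe : (g x + ω) ^ (1 - p - 1) = ((g x + ω) ^ p)⁻¹ := by
        rw [show (1:ℝ) - p - 1 = -p by ring, Real.rpow_neg hA.le]
      rw [hAe]
      have hi := hineq x hx'
      have := mul_le_mul_of_nonneg_right hi (le_of_lt (inv_pos.2 hAp))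
      rw [mul_assoc, mul_inv_cancel₀ hAp.ne', mul_one] at this
      nlinarith [inv_pos.2 hAp]
  have key : F s ≤ F t := hmono (Set.left_mem_Icc.2 hst) (Set.right_mem_Icc.2 hst) hst
  simp only [hF, intervalIntegral.integral_same, mul_zero, add_zero] at key
  linarith

theorem stmt4 (T : ℝ≥0∞) (hT : 0 < T) (p ω : ℝ) (hp : 1 < p) (hω : 0 ≤ ω)
    (h g g' : ℝ → ℝ)
    (hhc : ContinuousOn h {t : ℝ | 0 ≤ t ∧ ENNReal.ofReal t < T})
    (hh0 : ∀ t, 0 ≤ t → ENNReal.ofReal t < T → 0 ≤ h t)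
    (hg0 : ∀ t, 0 ≤ t → ENNReal.ofReal t < T → 0 ≤ g t)
    (hgd : ∀ t, 0 ≤ t → ENNReal.ofReal t < T → HasDerivAt g (g' t) t)
    (hgpos : 0 < g 0 + ω)
    (hineq : ∀ t, 0 ≤ t → ENNReal.ofReal t < T → g' t ≤ h t * (g t + ω) ^ p)
    (hden : ∀ t, 0 ≤ t → ENNReal.ofReal t < T →
      0 < (g 0 + ω) ^ (1 - p) - (p - 1) * ∫ ξ in (0:ℝ)..t, h ξ) :
    ∀ t, 0 ≤ t → ENNReal.ofReal t < T →
      (g t + ω) ^ (p - 1) ≤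
        1 / ((g 0 + ω) ^ (1 - p) - (p - 1) * ∫ ξ in (0:ℝ)..t, h ξ) := by
  intro t ht htT
  have hDpos := hden t ht htT
  set D := (g 0 + ω) ^ (1 - p) - (p - 1) * ∫ ξ in (0:ℝ)..t, h ξ with hDdef
  have hmem : ∀ x : ℝ, 0 ≤ x → x ≤ t → (0 ≤ x ∧ ENNReal.ofReal x < T) := fun x hx hxt =>
    ⟨hx, lt_of_le_of_lt (ENNReal.ofReal_le_ofReal hxt) htT⟩
  have hsub : Set.Icc (0:ℝ) t ⊆ {x : ℝ | 0 ≤ x ∧ ENNReal.ofReal x < T} := fun x hx =>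
    hmem x hx.1 hx.2
  have hH : ContinuousOn h (Set.Icc (0:ℝ) t) := hhc.mono hsub
  have hgω : ∀ x ∈ Set.Icc (0:ℝ) t, 0 ≤ g x + ω := fun x hx =>
    add_nonneg (hg0 x (hmem x hx.1 hx.2).1 (hmem x hx.1 hx.2).2) hω
  have hopen : IsOpen {x : ℝ | 0 < x ∧ ENNReal.ofReal x < T} :=
    IsOpen.and isOpen_Ioi (isOpen_Iio.preimage ENNReal.continuous_ofReal)
  have hcore : ∀ s : ℝ, 0 ≤ s → s ≤ t → g s + ω ≤ g 0 + ω →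
      (∀ x ∈ Set.Icc s t, 0 < g x + ω) → D ≤ (g t + ω) ^ (1 - p) := by
    intro s hs hst hsle hpos
    have hIccsub : Set.Icc s t ⊆ Set.Icc (0:ℝ) t := Set.Icc_subset_Icc_left hs
    have hφ := gron_core p ω hp h g g' s t hst (hH.mono hIccsub)
      (fun x hx => by
        have hx0 : 0 < x := lt_of_le_of_lt hs hx.1
        have hxT : ENNReal.ofReal x < T := (hmem x hx0.le hx.2.le).2
        exact hhc.continuousAt (Filter.mem_of_superset (hopen.mem_nhds ⟨hx0, hxT⟩)
          (fun y hy => ⟨hy.1.le, hy.2⟩)))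
      (fun x hx => hgd x (le_trans hs hx.1) (hmem x (le_trans hs hx.1) hx.2).2)
      (fun x hx => hineq x (le_trans hs hx.1) (hmem x (le_trans hs hx.1) hx.2).2)
      hpos
    have h1 : (g 0 + ω) ^ (1 - p) ≤ (g s + ω) ^ (1 - p) :=
      Real.rpow_le_rpow_of_nonpos (hpos s (Set.left_mem_Icc.2 hst)) hsle (by linarith)
    have hint0s : IntervalIntegrable h volume 0 s := by
      refine (hH.mono ?_).intervalIntegrable
      rw [Set.uIcc_of_le hs]; exact Set.Icc_subset_Icc_right hst
    have hintst : IntervalIntegrable h volume s t := by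
      refine (hH.mono ?_).intervalIntegrable
      rw [Set.uIcc_of_le hst]; exact Set.Icc_subset_Icc_left hs
    have hsplit : (∫ ξ in (0:ℝ)..s, h ξ) + ∫ ξ in s..t, h ξ = ∫ ξ in (0:ℝ)..t, h ξ :=
      intervalIntegral.integral_add_adjacent_intervals hint0s hintst
    have h0s : 0 ≤ ∫ ξ in (0:ℝ)..s, h ξ :=
      intervalIntegral.integral_nonneg hs
        (fun x hx => hh0 x hx.1 (hmem x hx.1 (le_trans hx.2 hst)).2)
    have hmul : (p - 1) * (∫ ξ in s..t, h ξ) ≤ (p - 1) * ∫ ξ in (0:ℝ)..t, h ξ :=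
      mul_le_mul_of_nonneg_left (by linarith) (by linarith)
    rw [hDdef]; linarith
  have hgt0 : 0 ≤ g t + ω := hgω t ⟨ht, le_rfl⟩
  rcases eq_or_lt_of_le hgt0 with heq | hlt
  · rw [← heq, Real.zero_rpow (by intro hc; linarith [sub_eq_zero.1 hc] : p - 1 ≠ 0)]
    positivity
  · have hfin : D ≤ (g t + ω) ^ (1 - p) := by
      by_cases hZ : ∃ x ∈ Set.Icc (0:ℝ) t, g x + ω = 0
      · obtain ⟨x0, hx0, hx0z⟩ := hZ
        set Z : Set ℝ := {x | x ∈ Set.Icc (0:ℝ) t ∧ g x + ω = 0} with hZdef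
        have hZne : Z.Nonempty := ⟨x0, hx0, hx0z⟩
        have hZbdd : BddAbove Z := ⟨t, fun x hx => hx.1.2⟩
        set a := sSup Z with hadef
        have haIcc : a ∈ Set.Icc (0:ℝ) t :=
          ⟨le_trans hx0.1 (le_csSup hZbdd ⟨hx0, hx0z⟩), csSup_le hZne fun x hx => hx.1.2⟩
        have hca : ContinuousAt (fun x => g x + ω) a :=
          ((hgd a haIcc.1 (hmem a haIcc.1 haIcc.2).2).continuousAt).add continuousAt_const
        have hacl : a ∈ closure Z := csSup_mem_closure hZne hZbdd
        have ha0 : g a + ω = 0 := by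
          have h1 : (fun x => g x + ω) a ∈ closure ((fun x => g x + ω) '' Z) :=
            hca.continuousWithinAt.mem_closure_image hacl
          have h2 : ((fun x => g x + ω) '' Z) ⊆ {0} := by
            rintro _ ⟨x, hx, rfl⟩; exact hx.2
          have h3 := (closure_minimal h2 isClosed_singleton) h1
          simpa using h3
        have hat : a < t := lt_of_le_of_ne haIcc.2 (fun hEq => by rw [hEq] at ha0; linarith)
        obtain ⟨δ, hδ, hδball⟩ := Metric.continuousAt_iff.1 hca (g 0 + ω) hgpos
        set s := min (a + δ / 2) t with hsdef
        have hs0 : 0 ≤ s := le_min (by linarith [haIcc.1]) ht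
        have hst : s ≤ t := min_le_right _ _
        have hsa : a < s := lt_min (by linarith) hat
        have hdsa : dist s a < δ := by
          rw [Real.dist_eq, abs_lt]
          constructor
          · linarith
          · have := min_le_left (a + δ / 2) t
            have : s ≤ a + δ / 2 := this
            linarith
        have hsle : g s + ω ≤ g 0 + ω := by
          have := hδball hdsa
          rw [ha0, Real.dist_eq, sub_zero, abs_lt] at this
          linarith [this.2]
        refine hcore s hs0 hst hsle ?_
        intro x hx
        have hxIcc : x ∈ Set.Icc (0:ℝ) t := ⟨le_trans hs0 hx.1, hx.2⟩
        rcases eq_or_lt_of_le (hgω x hxIcc) with hxe | hxl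
        · exfalso
          have hxZ : x ∈ Z := ⟨hxIcc, hxe.symm⟩
          have : x ≤ a := le_csSup hZbdd hxZ
          have : s ≤ a := le_trans hx.1 this
          linarith
        · exact hxl
      · refine hcore 0 le_rfl ht le_rfl ?_
        intro x hx
        exact (hgω x hx).lt_of_ne fun he => hZ ⟨x, hx, he.symm⟩
    have hrw : (g t + ω) ^ (p - 1) = ((g t + ω) ^ (1 - p))⁻¹ := by
      rw [show p - 1 = -(1 - p) by ring, Real.rpow_neg hlt.le]
    rw [hrw, one_div]
    exact inv_anti₀ hDpos hfin
end

section
/- (A priori estimate of Theorem 2.3.) Under the propagator setup and the solution setup, assume additionally: ‖V(t)u(t)‖ is differentiable in t on [0,T); there is ω ≥ 0 with β(t) ≤ α(t)·ω^p·‖U(t)‖^p for all t ≥ 0; ‖u₀‖ + ω > 0; J := ∫₀^∞ α(ξ)·‖V(ξ)‖·‖U(ξ)‖^p dξ < ∞; and (‖u₀‖ + ω)^{1−p} > (p−1)·J. Set M₃ := 1/((‖u₀‖ + ω)^{1−p} − (p−1)·J). Then for all t ∈ [0,T): ‖u(t)‖ ≤ ‖U(t)‖·(M₃^{1/(p−1)}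 − ω). -/
/-!
Put `v = V u`. Since `V' = -V B`, the linear part cancels and `v' = V (G + f)`; with `u = U v`
and `β ≤ α ω^p ‖U‖^p` this gives `‖v'‖ ≤ g (‖v‖ + ω)^p` for `g = α ‖V‖ ‖U‖^p`. So
`y = ‖v‖ + ω` satisfies `y ≤ c + ∫ g y^p` with `c = ‖u₀‖ + ω`, and Bihari's argument applies:
for `w = c + ∫ g y^p` we have `w' ≤ g w^p`, so `w^(1-p) + (p-1) ∫ g` is nondecreasing and
`y(t)^(1-p) ≥ w(t)^(1-p) ≥ c^(1-p) - (p-1) J`. Finally `‖u‖ ≤ ‖U‖ ‖v‖`.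
-/

open MeasureTheory Filter
open scoped ENNReal
open Set Topology

section Primitive

variable {E : Type*} [NormedAddCommGroup E] [NormedSpace ℝ E]
  {F : ℝ → E} {a b x : ℝ}

theorem ContinuousOn.hasDerivAt_integral_of_mem_Ioo [CompleteSpace E]
    (hF : ContinuousOn F (Icc a b)) (hx : x ∈ Ioo a b) :
    HasDerivAt (fun s => ∫ τ in a..s, F τ) (F x) x := by
  have hIcc : Icc a b ∈ 𝓝 x := Icc_mem_nhds hx.1 hx.2
  refine intervalIntegral.integral_hasDerivAt_right ?_ ⟨_, hIcc, ?_⟩ (hF.continuousAt hIcc)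
  · exact (hF.mono (uIcc_of_le hx.1.le ▸ Icc_subset_Icc_right hx.2.le)).intervalIntegrable
  · exact hF.aestronglyMeasurable measurableSet_Icc

theorem ContinuousOn.hasDerivWithinAt_integral_Ici [CompleteSpace E]
    (hF : ContinuousOn F (Icc a b)) (hx : x ∈ Ico a b) :
    HasDerivWithinAt (fun s => ∫ τ in a..s, F τ) (F x) (Ici x) x := by
  have hIcc : Icc a b ∈ 𝓝[≥] x :=
    mem_nhdsGE_iff_exists_Icc_subset.2 ⟨b, hx.2, Icc_subset_Icc_left hx.1⟩
  have hIcc' : Icc a b ∈ 𝓝[>] x := nhdsWithin_mono _ Ioi_subset_Ici_self hIcc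
  refine intervalIntegral.integral_hasDerivWithinAt_right (t := Ioi x) ?_ ⟨_, hIcc', ?_⟩
    ((hF x (Ico_subset_Icc_self hx)).mono_of_mem_nhdsWithin hIcc')
  · exact (hF.mono (uIcc_of_le hx.1 ▸ Icc_subset_Icc_right hx.2.le)).intervalIntegrable
  · exact hF.aestronglyMeasurable measurableSet_Icc

theorem ContinuousOn.continuousOn_integral_Icc (hF : ContinuousOn F (Icc a b)) :
    ContinuousOn (fun x => ∫ τ in a..x, F τ) (Icc a b) := by
  rcases le_or_gt a b with hab | hab
  · rw [← uIcc_of_le hab] at hF ⊢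
    exact intervalIntegral.continuousOn_primitive_interval (hF.integrableOn_compact isCompact_uIcc)
  · simp [Icc_eq_empty_of_lt hab]

end Primitive

theorem norm_le_add_integral_of_norm_deriv_le {E : Type*} [NormedAddCommGroup E]
    [NormedSpace ℝ E] {v v' : ℝ → E} {F : ℝ → ℝ} {a b : ℝ}
    (hv : ∀ x ∈ Icc a b, HasDerivAt v (v' x) x) (hF : ContinuousOn F (Icc a b))
    (hbound : ∀ x ∈ Icc a b, ‖v' x‖ ≤ F x) :
    ∀ x ∈ Icc a b, ‖v x‖ ≤ ‖v a‖ + ∫ τ in a..x, F τ :=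
  image_norm_le_of_norm_deriv_right_le_deriv_boundary'
    (fun x hx => (hv x hx).continuousAt.continuousWithinAt)
    (fun x hx => (hv x (Ico_subset_Icc_self hx)).hasDerivWithinAt) (by simp)
    (continuousOn_const.add hF.continuousOn_integral_Icc)
    (fun x hx => (hF.hasDerivWithinAt_integral_Ici hx).const_add _)
    (fun x hx => hbound x (Ico_subset_Icc_self hx))

section Bihari

variable {a b p : ℝ}

theorem monotoneOn_rpow_one_sub_add_of_deriv_le_mul_rpow {w w' g A : ℝ → ℝ} (hp : 1 < p)
    (hw : ContinuousOn w (Icc a b)) (hw0 : ∀ x ∈ Icc a b, 0 < w x)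
    (hw' : ∀ x ∈ Ioo a b, HasDerivAt w (w' x) x) (hA : ContinuousOn A (Icc a b))
    (hA' : ∀ x ∈ Ioo a b, HasDerivAt A (g x) x)
    (hle : ∀ x ∈ Ioo a b, w' x ≤ g x * w x ^ p) :
    MonotoneOn (fun x => w x ^ (1 - p) + (p - 1) * A x) (Icc a b) := by
  refine monotoneOn_of_hasDerivWithinAt_nonneg (convex_Icc a b)
    (f' := fun x => w' x * (1 - p) * w x ^ (1 - p - 1) + (p - 1) * g x)
    ((hw.rpow_const fun x hx => Or.inl (hw0 x hx).ne').add (continuousOn_const.mul hA))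
    (fun x hx => ?_) (fun x hx => ?_)
  · rw [interior_Icc] at hx
    exact (((hw' x hx).rpow_const (Or.inl (hw0 x (Ioo_subset_Icc_self hx)).ne')).add
      ((hA' x hx).const_mul (p - 1))).hasDerivWithinAt
  · rw [interior_Icc] at hx
    have hwx := hw0 x (Ioo_subset_Icc_self hx)
    -- the derivative is `(p - 1) * (g - w ^ (-p) * w')`
    have h : w' x * w x ^ (1 - p - 1) ≤ g x := by
      calc w' x * w x ^ (1 - p - 1) ≤ g x * w x ^ p * w x ^ (1 - p - 1) :=
            mul_le_mul_of_nonneg_right (hle x hx) (by positivity)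
        _ = g x := by rw [mul_assoc, ← Real.rpow_add hwx]; norm_num
    nlinarith

theorem le_one_div_rpow_of_le_rpow_one_sub {x D : ℝ} (hp : 1 < p) (hx : 0 < x) (hD : 0 < D)
    (h : D ≤ x ^ (1 - p)) : x ≤ (1 / D) ^ (1 / (p - 1)) := by
  have hexp : 1 / (1 - p) ≤ 0 := div_nonpos_of_nonneg_of_nonpos zero_le_one (by linarith)
  calc x = (x ^ (1 - p)) ^ (1 / (1 - p)) := by
        rw [← Real.rpow_mul hx.le, mul_one_div_cancel (by linarith), Real.rpow_one]
    _ ≤ D ^ (1 / (1 - p)) := Real.rpow_le_rpow_of_nonpos hD h hexp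
    _ = (1 / D) ^ (1 / (p - 1)) := by
        rw [one_div D, Real.inv_rpow hD.le, ← Real.rpow_neg hD.le, ← neg_sub p 1,
          one_div_neg_eq_neg_one_div]

theorem le_one_div_rpow_of_le_add_integral_mul_rpow {y g : ℝ → ℝ} {c : ℝ} (hp : 1 < p)
    (hab : a ≤ b) (hc : 0 < c) (hy : ContinuousOn y (Icc a b)) (hy0 : ∀ x ∈ Icc a b, 0 ≤ y x)
    (hg : ContinuousOn g (Icc a b)) (hg0 : ∀ x ∈ Icc a b, 0 ≤ g x)
    (hle : ∀ x ∈ Icc a b, y x ≤ c + ∫ τ in a..x, g τ * y τ ^ p)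
    (hD : 0 < c ^ (1 - p) - (p - 1) * ∫ τ in a..b, g τ) :
    y b ≤ (1 / (c ^ (1 - p) - (p - 1) * ∫ τ in a..b, g τ)) ^ (1 / (p - 1)) := by
  set F := fun τ => g τ * y τ ^ p
  set w := fun x => c + ∫ τ in a..x, F τ
  have hF : ContinuousOn F (Icc a b) := hg.mul (hy.rpow_const fun _ _ => Or.inr (by linarith))
  have hw0 : ∀ x ∈ Icc a b, 0 < w x := fun x hx =>
    hc.trans_le <| le_add_of_nonneg_right <| intervalIntegral.integral_nonneg hx.1 fun τ hτ =>
      have hτ' : τ ∈ Icc a b := ⟨hτ.1, hτ.2.trans hx.2⟩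
      mul_nonneg (hg0 τ hτ') (Real.rpow_nonneg (hy0 τ hτ') p)
  have hFw : ∀ x ∈ Ioo a b, F x ≤ g x * w x ^ p := fun x hx =>
    have hx' := Ioo_subset_Icc_self hx
    mul_le_mul_of_nonneg_left (Real.rpow_le_rpow (hy0 x hx') (hle x hx') (by linarith)) (hg0 x hx')
  have hmono := monotoneOn_rpow_one_sub_add_of_deriv_le_mul_rpow (w := w) hp
    (continuousOn_const.add hF.continuousOn_integral_Icc) hw0
    (fun x hx => (hF.hasDerivAt_integral_of_mem_Ioo hx).const_add c) hg.continuousOn_integral_Icc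
    (fun x hx => hg.hasDerivAt_integral_of_mem_Ioo hx) hFw
  have hab' : w a ^ (1 - p) + (p - 1) * ∫ τ in a..a, g τ ≤
      w b ^ (1 - p) + (p - 1) * ∫ τ in a..b, g τ :=
    hmono (left_mem_Icc.2 hab) (right_mem_Icc.2 hab) hab
  have hwa : w a = c := by simp [w]
  rw [hwa, intervalIntegral.integral_same, mul_zero, add_zero] at hab'
  have hb := right_mem_Icc.2 hab
  exact (hle b hb).trans (le_one_div_rpow_of_le_rpow_one_sub hp (hw0 b hb) hD (by linarith))

theorem norm_add_le_one_div_rpow_of_norm_deriv_le {E : Type*} [NormedAddCommGroup E]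
    [NormedSpace ℝ E] {v v' : ℝ → E} {g : ℝ → ℝ} {ω : ℝ} (hp : 1 < p) (hab : a ≤ b)
    (hω : 0 ≤ ω) (hc : 0 < ‖v a‖ + ω) (hv : ∀ x ∈ Icc a b, HasDerivAt v (v' x) x)
    (hg : ContinuousOn g (Icc a b)) (hg0 : ∀ x ∈ Icc a b, 0 ≤ g x)
    (hbound : ∀ x ∈ Icc a b, ‖v' x‖ ≤ g x * (‖v x‖ + ω) ^ p)
    (hD : 0 < (‖v a‖ + ω) ^ (1 - p) - (p - 1) * ∫ τ in a..b, g τ) :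
    ‖v b‖ + ω ≤ (1 / ((‖v a‖ + ω) ^ (1 - p) - (p - 1) * ∫ τ in a..b, g τ)) ^ (1 / (p - 1)) := by
  have hy : ContinuousOn (fun x => ‖v x‖ + ω) (Icc a b) := fun x hx =>
    ((hv x hx).continuousAt.norm.add continuousAt_const).continuousWithinAt
  have hF : ContinuousOn (fun x => g x * (‖v x‖ + ω) ^ p) (Icc a b) :=
    hg.mul (hy.rpow_const fun _ _ => Or.inr (by linarith))
  have hvF := norm_le_add_integral_of_norm_deriv_le hv hF hbound
  exact le_one_div_rpow_of_le_add_integral_mul_rpow (y := fun x => ‖v x‖ + ω) hp hab hc hy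
    (fun x _ => add_nonneg (norm_nonneg _) hω) hg hg0
    (fun x hx => by linarith [hvF x hx]) hD

end Bihari

theorem hasDerivAt_clm_apply_of_neg_comp {X : Type*} [NormedAddCommGroup X] [NormedSpace ℝ X]
    {V : ℝ → X →L[ℝ] X} {u : ℝ → X} {B : X →L[ℝ] X} {h : X} {t : ℝ}
    (hV : HasDerivAt V (-((V t).comp B)) t) (hu : HasDerivAt u (B (u t) + h) t) :
    HasDerivAt (fun s => V s (u s)) (V t h) t := by
  convert hV.clm_apply hu using 1
  simp only [neg_apply, ContinuousLinearMap.comp_apply, map_add]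
  abel

theorem norm_apply_add_le_mul_add_rpow {E F H : Type*} [NormedAddCommGroup E] [NormedSpace ℝ E]
    [NormedAddCommGroup F] [NormedSpace ℝ F] [NormedAddCommGroup H] [NormedSpace ℝ H]
    (U : E →L[ℝ] F) (V : F →L[ℝ] H) {x : E} {y z : F} {a ω p : ℝ} (hp : 1 ≤ p) (hω : 0 ≤ ω)
    (ha : 0 ≤ a) (hy : ‖y‖ ≤ a * ‖U x‖ ^ p) (hz : ‖z‖ ≤ a * ω ^ p * ‖U‖ ^ p) :
    ‖V (y + z)‖ ≤ a * ‖V‖ * ‖U‖ ^ p * (‖x‖ + ω) ^ p := by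
  have hUx : a * ‖U x‖ ^ p ≤ a * (‖U‖ ^ p * ‖x‖ ^ p) := by
    rw [← Real.mul_rpow (norm_nonneg _) (norm_nonneg _)]
    gcongr
    exact U.le_opNorm x
  calc ‖V (y + z)‖ ≤ ‖V‖ * (‖y‖ + ‖z‖) := (V.le_opNorm _).trans (by gcongr; exact norm_add_le _ _)
    _ ≤ ‖V‖ * (a * ‖U‖ ^ p * (‖x‖ ^ p + ω ^ p)) := by gcongr; linarith
    _ ≤ ‖V‖ * (a * ‖U‖ ^ p * (‖x‖ + ω) ^ p) := by
      gcongr; exact Real.add_rpow_le_rpow_add (norm_nonneg _) hω hp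
    _ = a * ‖V‖ * ‖U‖ ^ p * (‖x‖ + ω) ^ p := by ring

theorem stmt5_general
    {X : Type*} [NormedAddCommGroup X] [NormedSpace ℝ X]
    (B U V : ℝ → X →L[ℝ] X)
    (hV0 : V 0 = 1)
    (hUV : ∀ t, 0 ≤ t → (U t).comp (V t) = 1)
    (hUd : ∀ t, 0 ≤ t → HasDerivAt U ((B t).comp (U t)) t)
    (hVd : ∀ t, 0 ≤ t → HasDerivAt V (-((V t).comp (B t))) t)
    (p : ℝ) (hp : 1 < p)
    (α β : ℝ → ℝ) (hαc : Continuous α)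
    (hα0 : ∀ t, 0 ≤ α t)
    (T : ℝ≥0∞)
    (u G f : ℝ → X) (u₀ : X) (hu0 : u 0 = u₀)
    (hud : ∀ t, 0 ≤ t → ENNReal.ofReal t < T → HasDerivAt u (B t (u t) + G t + f t) t)
    (hGb : ∀ t, 0 ≤ t → ENNReal.ofReal t < T → ‖G t‖ ≤ α t * ‖u t‖ ^ p)
    (hfb : ∀ t, 0 ≤ t → ENNReal.ofReal t < T → ‖f t‖ ≤ β t)
    (ω : ℝ) (hω : 0 ≤ ω)
    (hβω : ∀ t, 0 ≤ t → β t ≤ α t * ω ^ p * ‖U t‖ ^ p)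
    (hpos : 0 < ‖u₀‖ + ω)
    (hJint : IntegrableOn (fun ξ => α ξ * ‖V ξ‖ * ‖U ξ‖ ^ p) (Set.Ioi (0:ℝ)))
    (J : ℝ) (hJ : J = ∫ ξ in Set.Ioi (0:ℝ), α ξ * ‖V ξ‖ * ‖U ξ‖ ^ p)
    (hsmall : (p - 1) * J < (‖u₀‖ + ω) ^ (1 - p)) :
    ∀ t, 0 ≤ t → ENNReal.ofReal t < T →
      ‖u t‖ ≤ ‖U t‖ * ((1 / ((‖u₀‖ + ω) ^ (1 - p) - (p - 1) * J)) ^ (1 / (p - 1)) - ω) := by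
  intro t ht htT
  have hsT : ∀ s ∈ Icc 0 t, 0 ≤ s ∧ ENNReal.ofReal s < T := fun s hs =>
    ⟨hs.1, (ENNReal.ofReal_le_ofReal hs.2).trans_lt htT⟩
  set v := fun s => V s (u s)
  set g := fun s => α s * ‖V s‖ * ‖U s‖ ^ p
  have hu : ∀ s, 0 ≤ s → u s = U s (v s) := fun s hs => by
    rw [← ContinuousLinearMap.comp_apply, hUV s hs, one_apply_eq_self]
  have hv0 : v 0 = u₀ := by simp [v, hV0, hu0]
  have hg : ContinuousOn g (Icc 0 t) := fun s hs =>
    ((hαc.continuousAt.mul (hVd s hs.1).continuousAt.norm).mul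
      ((hUd s hs.1).continuousAt.norm.rpow_const (Or.inr (by linarith)))).continuousWithinAt
  have hg0 : ∀ s, 0 ≤ g s := fun s =>
    mul_nonneg (mul_nonneg (hα0 s) (norm_nonneg _)) (by positivity)
  have hgJ : ∫ τ in 0..t, g τ ≤ J := by
    rw [intervalIntegral.integral_of_le ht, hJ]
    exact setIntegral_mono_set hJint (ae_of_all _ hg0) Ioc_subset_Ioi_self.eventuallyLE
  have hDt : 0 < (‖u₀‖ + ω) ^ (1 - p) - (p - 1) * ∫ τ in 0..t, g τ := by nlinarith
  have hvt := norm_add_le_one_div_rpow_of_norm_deriv_le (v := v) hp ht hω (by rwa [hv0])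
    (fun s hs => hasDerivAt_clm_apply_of_neg_comp (hVd s hs.1)
      (by simpa only [add_assoc] using hud s (hsT s hs).1 (hsT s hs).2))
    hg (fun s _ => hg0 s)
    (fun s hs => norm_apply_add_le_mul_add_rpow (U s) (V s) hp.le hω (hα0 s)
      (hu s hs.1 ▸ hGb s (hsT s hs).1 (hsT s hs).2)
      ((hfb s (hsT s hs).1 (hsT s hs).2).trans (hβω s hs.1)))
    (by rwa [hv0])
  rw [hv0] at hvt
  have hJt : (1 / ((‖u₀‖ + ω) ^ (1 - p) - (p - 1) * ∫ τ in 0..t, g τ)) ^ (1 / (p - 1)) ≤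
      (1 / ((‖u₀‖ + ω) ^ (1 - p) - (p - 1) * J)) ^ (1 / (p - 1)) := by
    have hq : 0 ≤ 1 / (p - 1) := one_div_nonneg.2 (by linarith)
    gcongr
  calc ‖u t‖ ≤ ‖U t‖ * ‖v t‖ := hu t ht ▸ (U t).le_opNorm _
    _ ≤ _ := by gcongr; linarith

theorem stmt5
    {X : Type*} [NormedAddCommGroup X] [NormedSpace ℝ X] [CompleteSpace X]
    (B U V : ℝ → X →L[ℝ] X)
    (hB : Continuous B)
    (hU0 : U 0 = 1) (hV0 : V 0 = 1)
    (hVU : ∀ t, 0 ≤ t → (V t).comp (U t) = 1)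
    (hUV : ∀ t, 0 ≤ t → (U t).comp (V t) = 1)
    (hUd : ∀ t, 0 ≤ t → HasDerivAt U ((B t).comp (U t)) t)
    (hVd : ∀ t, 0 ≤ t → HasDerivAt V (-((V t).comp (B t))) t)
    (p : ℝ) (hp : 1 < p)
    (α β : ℝ → ℝ) (hαc : Continuous α) (hβc : Continuous β)
    (hα0 : ∀ t, 0 ≤ α t) (hβ0 : ∀ t, 0 ≤ β t)
    (T : ℝ≥0∞) (hT : 0 < T)
    (u G f : ℝ → X) (u₀ : X) (hu0 : u 0 = u₀)
    (hGc : ContinuousOn G {t : ℝ | 0 ≤ t ∧ ENNReal.ofReal t < T})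
    (hfc : ContinuousOn f {t : ℝ | 0 ≤ t ∧ ENNReal.ofReal t < T})
    (hud : ∀ t, 0 ≤ t → ENNReal.ofReal t < T → HasDerivAt u (B t (u t) + G t + f t) t)
    (hGb : ∀ t, 0 ≤ t → ENNReal.ofReal t < T → ‖G t‖ ≤ α t * ‖u t‖ ^ p)
    (hfb : ∀ t, 0 ≤ t → ENNReal.ofReal t < T → ‖f t‖ ≤ β t)
    (hVud : ∀ t, 0 ≤ t → ENNReal.ofReal t < T →
      DifferentiableAt ℝ (fun s => ‖V s (u s)‖) t)
    (ω : ℝ) (hω : 0 ≤ ω)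
    (hβω : ∀ t, 0 ≤ t → β t ≤ α t * ω ^ p * ‖U t‖ ^ p)
    (hpos : 0 < ‖u₀‖ + ω)
    (hJint : IntegrableOn (fun ξ => α ξ * ‖V ξ‖ * ‖U ξ‖ ^ p) (Set.Ioi (0:ℝ)))
    (J : ℝ) (hJ : J = ∫ ξ in Set.Ioi (0:ℝ), α ξ * ‖V ξ‖ * ‖U ξ‖ ^ p)
    (hsmall : (p - 1) * J < (‖u₀‖ + ω) ^ (1 - p)) :
    ∀ t, 0 ≤ t → ENNReal.ofReal t < T →
      ‖u t‖ ≤ ‖U t‖ * ((1 / ((‖u₀‖ + ω) ^ (1 - p) - (p - 1) * J)) ^ (1 / (p - 1)) - ω) :=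
  stmt5_general B U V hV0 hUV hUd hVd p hp α β hαc hα0 T u G f u₀ hu0 hud hGb hfb ω hω hβω hpos
    hJint J hJ hsmall
end

section
/- (Corollary 2.5, decay version.) Under the propagator setup and the solution setup with T = ∞, assume additionally: ‖V(t)u(t)‖ is differentiable in t on [0,∞); J := ∫₀^∞ α(ξ)·‖V(ξ)‖·‖U(ξ)‖^p dξ < ∞ with J > 0; there is ω ≥ 0 with β(t) ≤ α(t)·ω^p·‖U(t)‖^p for all t ≥ 0 and ω < ((p−1)·J)^{−1/(p−1)}; 0 < ‖u₀‖ < ((p−1)·J)^{−1/(p−1)} − ω; and ‖U(t)‖ → 0 as t → ∞. Then u(t) → 0 as t → ∞. -/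
open MeasureTheory Filter
open scoped ENNReal NNReal

lemma my_rpow_add_rpow_le_rpow {x y : ℝ} (hx : 0 ≤ x) (hy : 0 ≤ y) {p : ℝ} (hp : 1 ≤ p) :
    x ^ p + y ^ p ≤ (x + y) ^ p := by
  lift x to ℝ≥0 using hx
  lift y to ℝ≥0 using hy
  have hp0 : (0:ℝ) < p := lt_of_lt_of_le one_pos hp
  have h := NNReal.rpow_add_rpow_le_add x y hp
  have h2 := NNReal.rpow_le_rpow h hp0.le
  rw [← NNReal.rpow_mul, one_div, inv_mul_cancel₀ hp0.ne', NNReal.rpow_one] at h2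
  have := NNReal.coe_le_coe.mpr h2
  push_cast at this ⊢
  simpa [NNReal.coe_rpow] using this

set_option maxHeartbeats 1000000 in
theorem stmt6
    {X : Type*} [NormedAddCommGroup X] [NormedSpace ℝ X] [CompleteSpace X]
    (B U V : ℝ → X →L[ℝ] X)
    (hB : Continuous B)
    (hU0 : U 0 = 1) (hV0 : V 0 = 1)
    (hVU : ∀ t, 0 ≤ t → (V t).comp (U t) = 1)
    (hUV : ∀ t, 0 ≤ t → (U t).comp (V t) = 1)
    (hUd : ∀ t, 0 ≤ t → HasDerivAt U ((B t).comp (U t)) t)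
    (hVd : ∀ t, 0 ≤ t → HasDerivAt V (-((V t).comp (B t))) t)
    (p : ℝ) (hp : 1 < p)
    (α β : ℝ → ℝ) (hαc : Continuous α) (hβc : Continuous β)
    (hα0 : ∀ t, 0 ≤ α t) (hβ0 : ∀ t, 0 ≤ β t)
    (u G f : ℝ → X) (u₀ : X) (hu0 : u 0 = u₀)
    (hGc : ContinuousOn G (Set.Ici 0))
    (hfc : ContinuousOn f (Set.Ici 0))
    (hud : ∀ t, 0 ≤ t → HasDerivAt u (B t (u t) + G t + f t) t)
    (hGb : ∀ t, 0 ≤ t → ‖G t‖ ≤ α t * ‖u t‖ ^ p)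
    (hfb : ∀ t, 0 ≤ t → ‖f t‖ ≤ β t)
    (hVud : ∀ t, 0 ≤ t → DifferentiableAt ℝ (fun s => ‖V s (u s)‖) t)
    (hJint : IntegrableOn (fun ξ => α ξ * ‖V ξ‖ * ‖U ξ‖ ^ p) (Set.Ioi (0:ℝ)))
    (J : ℝ) (hJ : J = ∫ ξ in Set.Ioi (0:ℝ), α ξ * ‖V ξ‖ * ‖U ξ‖ ^ p)
    (hJ0 : 0 < J)
    (ω : ℝ) (hω : 0 ≤ ω)
    (hβω : ∀ t, 0 ≤ t → β t ≤ α t * ω ^ p * ‖U t‖ ^ p)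
    (hωlt : ω < ((p - 1) * J) ^ (-(1 / (p - 1))))
    (hu₀0 : 0 < ‖u₀‖)
    (hu₀lt : ‖u₀‖ < ((p - 1) * J) ^ (-(1 / (p - 1))) - ω)
    (hUlim : Tendsto (fun t => ‖U t‖) atTop (nhds 0)) :
    Tendsto u atTop (nhds 0) := by
  have hp0 : (0:ℝ) < p - 1 := by linarith
  have hp1 : (1:ℝ) ≤ p := hp.le
  have hppos : (0:ℝ) < p := by linarith
  set c : ℝ := ‖u₀‖ + ω with hc_def
  have hc0 : 0 < c := by positivity
  have hcM : c < ((p - 1) * J) ^ (-(1 / (p - 1))) := by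
    simp only [hc_def]; linarith
  -- the function w
  set w : ℝ → X := fun s => V s (u s) with hw_def
  have hwd : ∀ t, 0 ≤ t → HasDerivAt w (V t (G t + f t)) t := by
    intro t ht
    have h1 := (hVd t ht).clm_apply (hud t ht)
    convert h1 using 1
    simp [ContinuousLinearMap.comp_apply, map_add]
    abel
  have hwc : ∀ t, 0 ≤ t → ContinuousAt w t := fun t ht => (hwd t ht).continuousAt
  have huw : ∀ s, 0 ≤ s → u s = U s (w s) := by
    intro s hs
    have := congrArg (fun (L : X →L[ℝ] X) => L (u s)) (hUV s hs)
    simpa [hw_def] using this.symm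
  have hub : ∀ s, 0 ≤ s → ‖u s‖ ≤ ‖U s‖ * ‖w s‖ := by
    intro s hs
    rw [huw s hs]
    exact (U s).le_opNorm _
  have hw0 : w 0 = u₀ := by simp [hw_def, hV0, hu0]
  -- h, k, g and their truncated versions
  set h : ℝ → ℝ := fun s => ‖w s‖ + ω with hh_def
  have hh0 : ∀ s, 0 ≤ h s := fun s => by positivity
  have hh0c : h 0 = c := by simp [hh_def, hw0, hc_def]
  set k : ℝ → ℝ := fun s => α s * ‖V s‖ * ‖U s‖ ^ p with hk_def
  have hk0 : ∀ s, 0 ≤ k s := by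
    intro s
    have : (0:ℝ) ≤ ‖U s‖ ^ p := Real.rpow_nonneg (norm_nonneg _) p
    have := hα0 s
    positivity
  have hkc : ∀ t : ℝ, 0 ≤ t → ContinuousAt k t := by
    intro t ht
    have hUc : ContinuousAt U t := (hUd t ht).continuousAt
    have hVc : ContinuousAt V t := (hVd t ht).continuousAt
    exact ((hαc.continuousAt.mul hVc.norm).mul
      (hUc.norm.rpow_const (Or.inr hppos.le)))
  have hhc : ∀ t : ℝ, 0 ≤ t → ContinuousAt h t := by
    intro t ht
    exact ((hwc t ht).norm.add continuousAt_const)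
  set g : ℝ → ℝ := fun s => k s * h s ^ p with hg_def
  have hgc : ∀ t : ℝ, 0 ≤ t → ContinuousAt g t := by
    intro t ht
    exact (hkc t ht).mul ((hhc t ht).rpow_const (Or.inr hppos.le))
  have hmaxc : Continuous (fun s : ℝ => max s 0) := continuous_id.max continuous_const
  have hmax_mem : ∀ s : ℝ, (0:ℝ) ≤ max s 0 := fun s => le_max_right s 0
  set gm : ℝ → ℝ := fun s => g (max s 0) with hgm_def
  set km : ℝ → ℝ := fun s => k (max s 0) with hkm_def
  have hgmc : Continuous gm := by
    rw [continuous_iff_continuousAt]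
    intro x
    exact ContinuousAt.comp (x := x) (g := g) (f := fun s : ℝ => max s 0)
      (hgc (max x 0) (hmax_mem x)) hmaxc.continuousAt
  have hkmc : Continuous km := by
    rw [continuous_iff_continuousAt]
    intro x
    exact ContinuousAt.comp (x := x) (g := k) (f := fun s : ℝ => max s 0)
      (hkc (max x 0) (hmax_mem x)) hmaxc.continuousAt
  have hgm0 : ∀ s, 0 ≤ gm s :=
    fun s => mul_nonneg (hk0 _) (Real.rpow_nonneg (hh0 _) p)
  have hgm_eq : ∀ s : ℝ, 0 ≤ s → gm s = g s := by
    intro s hs; simp [hgm_def, max_eq_left hs]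
  have hkm_eq : ∀ s : ℝ, 0 ≤ s → km s = k s := by
    intro s hs; simp [hkm_def, max_eq_left hs]
  -- F
  set F : ℝ → ℝ := fun t => c + ∫ s in (0:ℝ)..t, gm s with hF_def
  have hFd : ∀ t : ℝ, HasDerivAt F (gm t) t := by
    intro t
    have := intervalIntegral.integral_hasDerivAt_right
      (hgmc.intervalIntegrable 0 t)
      (hgmc.stronglyMeasurableAtFilter volume (nhds t))
      hgmc.continuousAt
    simpa [hF_def] using this.const_add c
  have hcF : ∀ t : ℝ, 0 ≤ t → c ≤ F t := by
    intro t ht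
    have : 0 ≤ ∫ s in (0:ℝ)..t, gm s :=
      intervalIntegral.integral_nonneg ht (fun s _ => hgm0 s)
    simp only [hF_def]; linarith
  have hFpos : ∀ t : ℝ, 0 ≤ t → 0 < F t := fun t ht => lt_of_lt_of_le hc0 (hcF t ht)
  -- pointwise bound on the derivative of w
  have hptw : ∀ s : ℝ, 0 ≤ s → ‖V s (G s + f s)‖ ≤ gm s := by
    intro s hs
    have h1 : ‖V s (G s + f s)‖ ≤ ‖V s‖ * (‖G s‖ + ‖f s‖) :=
      le_trans ((V s).le_opNorm _) (by
        have := norm_add_le (G s) (f s)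
        have hV := norm_nonneg (V s)
        nlinarith)
    have hG : ‖G s‖ ≤ α s * ‖u s‖ ^ p := hGb s hs
    have hf' : ‖f s‖ ≤ α s * ω ^ p * ‖U s‖ ^ p := le_trans (hfb s hs) (hβω s hs)
    have hu_p : ‖u s‖ ^ p ≤ ‖U s‖ ^ p * ‖w s‖ ^ p := by
      rw [← Real.mul_rpow (norm_nonneg _) (norm_nonneg _)]
      exact Real.rpow_le_rpow (norm_nonneg _) (hub s hs) hppos.le
    have hsum : ‖w s‖ ^ p + ω ^ p ≤ h s ^ p :=
      my_rpow_add_rpow_le_rpow (norm_nonneg _) hω hp1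
    have hkey : ‖V s‖ * (‖G s‖ + ‖f s‖) ≤ k s * (‖w s‖ ^ p + ω ^ p) := by
      have h2 : ‖G s‖ + ‖f s‖ ≤ α s * (‖U s‖ ^ p * ‖w s‖ ^ p) + α s * ω ^ p * ‖U s‖ ^ p := by
        have := mul_le_mul_of_nonneg_left hu_p (hα0 s)
        linarith
      have h3 := mul_le_mul_of_nonneg_left h2 (norm_nonneg (V s))
      calc ‖V s‖ * (‖G s‖ + ‖f s‖)
          ≤ ‖V s‖ * (α s * (‖U s‖ ^ p * ‖w s‖ ^ p) + α s * ω ^ p * ‖U s‖ ^ p) := h3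
        _ = k s * (‖w s‖ ^ p + ω ^ p) := by simp only [hk_def]; ring
    rw [hgm_eq s hs]
    calc ‖V s (G s + f s)‖ ≤ k s * (‖w s‖ ^ p + ω ^ p) := le_trans h1 hkey
      _ ≤ k s * h s ^ p := mul_le_mul_of_nonneg_left hsum (hk0 s)
  -- integral inequality : h t ≤ F t
  have hhF : ∀ t : ℝ, 0 ≤ t → h t ≤ F t := by
    intro t ht
    have hw'cont : ContinuousOn (fun s => V s (G s + f s)) (Set.Icc 0 t) := by
      have hVcont : ContinuousOn V (Set.Icc (0:ℝ) t) := fun x hx =>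
        ((hVd x hx.1).continuousAt).continuousWithinAt
      have hGf : ContinuousOn (fun s => G s + f s) (Set.Icc (0:ℝ) t) :=
        (hGc.mono (fun x hx => hx.1)).add (hfc.mono (fun x hx => hx.1))
      exact hVcont.clm_apply hGf
    have hftc : ∫ s in (0:ℝ)..t, V s (G s + f s) = w t - w 0 := by
      apply intervalIntegral.integral_eq_sub_of_hasDerivAt
      · intro x hx
        rw [Set.uIcc_of_le ht] at hx
        exact hwd x hx.1
      · exact (hw'cont.mono (by rw [Set.uIcc_of_le ht])).intervalIntegrable
    have hnorm : ‖w t‖ - ‖w 0‖ ≤ ∫ s in (0:ℝ)..t, ‖V s (G s + f s)‖ := by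
      have h1 : ‖w t‖ - ‖w 0‖ ≤ ‖w t - w 0‖ := norm_sub_norm_le _ _
      have h2 : ‖∫ s in (0:ℝ)..t, V s (G s + f s)‖ ≤
          ∫ s in (0:ℝ)..t, ‖V s (G s + f s)‖ :=
        intervalIntegral.norm_integral_le_integral_norm ht
      rw [hftc] at h2
      linarith
    have hmono : ∫ s in (0:ℝ)..t, ‖V s (G s + f s)‖ ≤ ∫ s in (0:ℝ)..t, gm s := by
      apply intervalIntegral.integral_mono_on ht
      · exact ((hw'cont.norm).mono (by rw [Set.uIcc_of_le ht])).intervalIntegrable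
      · exact hgmc.intervalIntegrable 0 t
      · exact fun x hx => hptw x hx.1
    have : h t = ‖w t‖ + ω := rfl
    have hF' : F t = c + ∫ s in (0:ℝ)..t, gm s := rfl
    rw [this, hF', hc_def]
    have : ‖w 0‖ = ‖u₀‖ := by rw [hw0]
    linarith
  -- the Lyapunov function Ψ
  set Ψ : ℝ → ℝ := fun t => F t ^ (1 - p) + (p - 1) * ∫ s in (0:ℝ)..t, km s with hΨ_def
  have hKd : ∀ t : ℝ, HasDerivAt (fun τ => ∫ s in (0:ℝ)..τ, km s) (km t) t := by
    intro t
    exact intervalIntegral.integral_hasDerivAt_right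
      (hkmc.intervalIntegrable 0 t)
      (hkmc.stronglyMeasurableAtFilter volume (nhds t))
      hkmc.continuousAt
  have hΨd : ∀ t : ℝ, 0 ≤ t →
      HasDerivAt Ψ (gm t * (1 - p) * F t ^ (1 - p - 1) + (p - 1) * km t) t := by
    intro t ht
    exact ((hFd t).rpow_const (Or.inl (hFpos t ht).ne')).add ((hKd t).const_mul (p - 1))
  have hΨ'0 : ∀ t : ℝ, 0 < t →
      0 ≤ gm t * (1 - p) * F t ^ (1 - p - 1) + (p - 1) * km t := by
    intro t ht
    have ht' := ht.le
    have hFp := hFpos t ht'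
    have hgF : gm t ≤ k t * F t ^ p := by
      rw [hgm_eq t ht']
      exact mul_le_mul_of_nonneg_left
        (Real.rpow_le_rpow (hh0 t) (hhF t ht') hppos.le) (hk0 t)
    have hFnegp : (0:ℝ) < F t ^ (1 - p - 1) := Real.rpow_pos_of_pos hFp _
    have hprod1 : F t ^ p * F t ^ (1 - p - 1) = 1 := by
      rw [← Real.rpow_add hFp]
      have hz : p + (1 - p - 1) = 0 := by ring
      rw [hz, Real.rpow_zero]
    have h1 : gm t * (1 - p) * F t ^ (1 - p - 1) ≥ (1 - p) * k t := by
      have hmul := mul_le_mul_of_nonneg_right hgF hFnegp.le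
      -- gm t * F^(1-p-1) ≤ k t * F^p * F^(1-p-1) = k t
      have : gm t * F t ^ (1 - p - 1) ≤ k t := by
        calc gm t * F t ^ (1 - p - 1) ≤ k t * F t ^ p * F t ^ (1 - p - 1) := hmul
          _ = k t * (F t ^ p * F t ^ (1 - p - 1)) := by ring
          _ = k t := by rw [hprod1, mul_one]
      nlinarith [hgm0 t, hFnegp.le]
    rw [hkm_eq t ht']
    nlinarith
  -- monotonicity of Ψ on [0, ∞)
  have hΨmono : MonotoneOn Ψ (Set.Ici (0:ℝ)) := by
    apply monotoneOn_of_hasDerivWithinAt_nonneg (convex_Ici 0)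
      (f' := fun t => gm t * (1 - p) * F t ^ (1 - p - 1) + (p - 1) * km t)
    · intro x hx
      exact ((hΨd x hx).continuousAt).continuousWithinAt
    · intro x hx
      rw [interior_Ici] at hx
      exact ((hΨd x hx.le).hasDerivWithinAt)
    · intro x hx
      rw [interior_Ici] at hx
      exact hΨ'0 x hx
  have hF0 : F 0 = c := by
    simp only [hF_def, intervalIntegral.integral_same, add_zero]
  have hΨ0 : Ψ 0 = c ^ (1 - p) := by
    simp only [hΨ_def, hF0, intervalIntegral.integral_same, mul_zero, add_zero]
  -- bound on the truncated integral of k : ≤ J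
  have hKJ : ∀ t : ℝ, 0 ≤ t → (∫ s in (0:ℝ)..t, km s) ≤ J := by
    intro t ht
    rw [intervalIntegral.integral_of_le ht]
    have heq : ∫ s in Set.Ioc (0:ℝ) t, km s = ∫ s in Set.Ioc (0:ℝ) t, k s := by
      apply setIntegral_congr_fun measurableSet_Ioc
      intro x hx
      exact hkm_eq x hx.1.le
    rw [heq, hJ]
    apply setIntegral_mono_set hJint
    · exact ae_of_all _ (fun s => hk0 s)
    · exact HasSubset.Subset.eventuallyLE Set.Ioc_subset_Ioi_self
  -- lower bound for F ^ (1 - p)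
  set δ : ℝ := c ^ (1 - p) - (p - 1) * J with hδ_def
  have hδpos : 0 < δ := by
    set A : ℝ := (p - 1) * J with hA_def
    have hA0 : 0 < A := mul_pos hp0 hJ0
    have hMp : (A ^ (-(1 / (p - 1)))) ^ (p - 1) = A⁻¹ := by
      rw [← Real.rpow_mul hA0.le]
      have he : -(1 / (p - 1)) * (p - 1) = -1 := by
        field_simp
      rw [he, Real.rpow_neg_one]
    have hcp : c ^ (p - 1) < A⁻¹ := by
      rw [← hMp]
      exact Real.rpow_lt_rpow hc0.le hcM hp0
    have hcpos : 0 < c ^ (p - 1) := Real.rpow_pos_of_pos hc0 _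
    have hc1p : c ^ (1 - p) = (c ^ (p - 1))⁻¹ := by
      have he : (1 : ℝ) - p = -(p - 1) := by ring
      rw [he, Real.rpow_neg hc0.le]
    have hAlt : A < c ^ (1 - p) := by
      rw [hc1p]
      have h1 : A * c ^ (p - 1) < 1 := by
        have := mul_lt_mul_of_pos_left hcp hA0
        rwa [mul_inv_cancel₀ hA0.ne'] at this
      have h2 := mul_lt_mul_of_pos_right h1 (inv_pos.mpr hcpos)
      rwa [one_mul, mul_assoc, mul_inv_cancel₀ hcpos.ne', mul_one] at h2
    simp only [hδ_def, hA_def] at hAlt ⊢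
    linarith
  have hFδ : ∀ t : ℝ, 0 ≤ t → δ ≤ F t ^ (1 - p) := by
    intro t ht
    have h1 := hΨmono (Set.self_mem_Ici) (Set.mem_Ici.mpr ht) ht
    rw [hΨ0] at h1
    have h2 : (p - 1) * ∫ s in (0:ℝ)..t, km s ≤ (p - 1) * J :=
      mul_le_mul_of_nonneg_left (hKJ t ht) hp0.le
    simp only [hΨ_def] at h1
    simp only [hδ_def]
    linarith
  -- upper bound for F
  set C : ℝ := δ ^ (1 - p)⁻¹ with hC_def
  have h1p : (1:ℝ) - p ≠ 0 := by linarith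
  have hFC : ∀ t : ℝ, 0 ≤ t → F t ≤ C := by
    intro t ht
    have h1 := Real.rpow_le_rpow_of_nonpos hδpos (hFδ t ht)
      (by
        have : (1:ℝ) - p < 0 := by linarith
        exact (inv_nonpos.mpr this.le))
    rwa [← Real.rpow_mul (hFpos t ht).le, mul_inv_cancel₀ h1p, Real.rpow_one] at h1
  -- conclusion
  apply squeeze_zero_norm' (a := fun t => C * ‖U t‖)
  · filter_upwards [eventually_ge_atTop (0:ℝ)] with t ht
    have h1 : ‖u t‖ ≤ ‖U t‖ * ‖w t‖ := hub t ht
    have h2' : ‖w t‖ ≤ F t := by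
      have := hhF t ht
      simp only [hh_def] at this
      linarith
    have h3 : ‖U t‖ * ‖w t‖ ≤ ‖U t‖ * C :=
      mul_le_mul_of_nonneg_left (le_trans h2' (hFC t ht)) (norm_nonneg _)
    calc ‖u t‖ ≤ ‖U t‖ * ‖w t‖ := h1
      _ ≤ ‖U t‖ * C := h3
      _ = C * ‖U t‖ := mul_comm _ _
  · have := hUlim.const_mul C
    simpa using this
end

section
/- (Quantitative form of Corollary 2.9.) Under the propagator setup and the solution setup with T = ∞, assume additionally: ‖V(t)u(t)‖ is differentiable in t on [0,∞); ‖U(t)‖ → 0 as t → ∞; 0 < ∫₀^∞ α(ξ) dξ < ∞; there is c > 0 with ‖V(t)‖·‖U(t)‖ ≤ c for all t ≥ 0. Then J := ∫₀^∞ α(ξ)·‖V(ξ)‖·‖U(ξ)‖^p dξ < ∞; and if moreover J > 0, β(t) ≤ α(t)·‖U(t)‖^p·(1/2)^p·((p−1)·J)^{−p/(p−1)} for all t ≥ 0, and 0 < ‖u₀‖ < (1/2)·((p−1)·J)^{−1/(p−1)}, then u(t) → 0 as t → ∞. -/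
open MeasureTheory Filter
open scoped ENNReal

/-!
With `w t = V t (u t)` one has `w' = V (G + f)` and `u = U w`. Put `g = α ‖V‖ ‖U‖ ^ p` and
`a = ½ ((p - 1) J) ^ (-1 / (p - 1))`, so that `(2a) ^ (1 - p) = (p - 1) J` and the bound on `β`
reads `β ≤ α ‖U‖ ^ p a ^ p`; then `‖w'‖ ≤ g (‖w‖ + a) ^ p`. By the Bihari inequality,
`(‖w‖ + a) ^ (1 - p) ≥ (‖u₀‖ + a) ^ (1 - p) - (p - 1) ∫ g`, which stays positive because
`‖u₀‖ + a < 2a` and `∫ g ≤ J`. So `w` is bounded and `‖u‖ ≤ ‖U‖ ‖w‖ → 0`. The integral `J` is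
finite since `g ≤ c α ‖U‖ ^ (p - 1)` and `‖U‖`, continuous with limit `0`, is bounded.
-/

open Set

theorem ContinuousOn.bddAbove_image_Ici_of_tendsto {f : ℝ → ℝ} {a l : ℝ}
    (hf : ContinuousOn f (Ici a)) (hlim : Tendsto f atTop (nhds l)) : BddAbove (f '' Ici a) := by
  obtain ⟨T, hT⟩ := eventually_atTop.1 (hlim.eventually (eventually_le_nhds (lt_add_one l)))
  obtain ⟨M, hM⟩ :=
    isCompact_Icc.bddAbove_image (hf.mono (Icc_subset_Ici_self : Icc a (max a T) ⊆ Ici a))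
  refine ⟨max M (l + 1), ?_⟩
  rintro _ ⟨t, ht, rfl⟩
  rcases le_total t (max a T) with h | h
  · exact (hM ⟨t, ⟨ht, h⟩, rfl⟩).trans (le_max_left _ _)
  · exact (hT t ((le_max_right _ _).trans h)).trans (le_max_right _ _)

theorem integrableOn_mul_mul_rpow_of_mul_le {α v μ : ℝ → ℝ} {s : Set ℝ} {c p : ℝ}
    (hs : MeasurableSet s) (hp : 1 ≤ p) (hα : IntegrableOn α s) (hα0 : ∀ t ∈ s, 0 ≤ α t)
    (hmeas : AEStronglyMeasurable (fun t => α t * v t * μ t ^ p) (volume.restrict s))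
    (hv : ∀ t ∈ s, 0 ≤ v t) (hμ : ∀ t ∈ s, 0 ≤ μ t) (hμM : BddAbove (μ '' s))
    (hvμ : ∀ t ∈ s, v t * μ t ≤ c) :
    IntegrableOn (fun t => α t * v t * μ t ^ p) s := by
  obtain ⟨M, hM⟩ := hμM
  refine Integrable.mono' (hα.const_mul (c * M ^ (p - 1))) hmeas ?_
  filter_upwards [ae_restrict_mem hs] with t ht
  have hμp : μ t ^ p = μ t * μ t ^ (p - 1) := by
    rw [← Real.rpow_one_add' (hμ t ht) (by linarith), add_sub_cancel]
  have hμM : μ t ^ (p - 1) ≤ M ^ (p - 1) :=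
    Real.rpow_le_rpow (hμ t ht) (hM ⟨t, ht, rfl⟩) (by linarith)
  have hM0 : 0 ≤ M ^ (p - 1) := Real.rpow_nonneg ((hμ t ht).trans (hM ⟨t, ht, rfl⟩)) _
  rw [Real.norm_of_nonneg (by positivity [hα0 t ht, hv t ht, hμ t ht]), hμp]
  calc α t * v t * (μ t * μ t ^ (p - 1)) = α t * ((v t * μ t) * μ t ^ (p - 1)) := by ring
    _ ≤ α t * ((v t * μ t) * M ^ (p - 1)) := by
        gcongr
        · exact hα0 t ht
        · exact mul_nonneg (hv t ht) (hμ t ht)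
    _ ≤ α t * (c * M ^ (p - 1)) := by gcongr; exacts [hα0 t ht, hvμ t ht]
    _ = c * M ^ (p - 1) * α t := by ring

theorem intervalIntegral_le_integral_Ioi {g : ℝ → ℝ} {a t : ℝ} (hg : IntegrableOn g (Ioi a))
    (hg0 : ∀ s, a < s → 0 ≤ g s) (ht : a ≤ t) : ∫ s in a..t, g s ≤ ∫ s in Ioi a, g s := by
  rw [intervalIntegral.integral_of_le ht]
  exact setIntegral_mono_set hg ((ae_restrict_mem measurableSet_Ioi).mono hg0)
    Ioc_subset_Ioi_self.eventuallyLE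

theorem monotoneOn_rpow_one_sub_add_mul_of_deriv_le {y y' g Γ : ℝ → ℝ} {p : ℝ} (hp : 1 < p)
    (hy : ∀ t, 0 ≤ t → HasDerivAt y (y' t) t) (hΓ : ∀ t, 0 ≤ t → HasDerivAt Γ (g t) t)
    (hy0 : ∀ t, 0 ≤ t → 0 < y t) (hy' : ∀ t, 0 ≤ t → y' t ≤ g t * y t ^ p) :
    MonotoneOn (fun t => y t ^ (1 - p) + (p - 1) * Γ t) (Ici 0) := by
  have hderiv : ∀ t, 0 ≤ t → HasDerivAt (fun t => y t ^ (1 - p) + (p - 1) * Γ t)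
      (y' t * (1 - p) * y t ^ (1 - p - 1) + (p - 1) * g t) t := fun t ht =>
    ((hy t ht).rpow_const (Or.inl (hy0 t ht).ne')).add ((hΓ t ht).const_mul (p - 1))
  refine monotoneOn_of_hasDerivWithinAt_nonneg (convex_Ici 0)
    (fun t ht => (hderiv t ht).continuousAt.continuousWithinAt)
    (fun t ht => (hderiv t (interior_subset ht)).hasDerivWithinAt) fun t ht => ?_
  have ht : 0 ≤ t := interior_subset ht
  have hyp : 0 < y t ^ p := Real.rpow_pos_of_pos (hy0 t ht) p
  have hy'' : y' t * y t ^ (-p) ≤ g t := by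
    rw [Real.rpow_neg (hy0 t ht).le, ← div_eq_mul_inv, div_le_iff₀ hyp]
    exact hy' t ht
  rw [show 1 - p - 1 = -p by ring]
  linarith [mul_le_mul_of_nonneg_left hy'' (sub_nonneg.2 hp.le)]

theorem le_rpow_of_deriv_le_mul_rpow {y y' g Γ : ℝ → ℝ} {p K : ℝ} (hp : 1 < p)
    (hy : ∀ t, 0 ≤ t → HasDerivAt y (y' t) t) (hΓ : ∀ t, 0 ≤ t → HasDerivAt Γ (g t) t)
    (hy0 : ∀ t, 0 ≤ t → 0 < y t) (hy' : ∀ t, 0 ≤ t → y' t ≤ g t * y t ^ p)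
    (hK : ∀ t, 0 ≤ t → Γ t - Γ 0 ≤ K) (hδ : (p - 1) * K < y 0 ^ (1 - p)) {t : ℝ} (ht : 0 ≤ t) :
    y t ≤ (y 0 ^ (1 - p) - (p - 1) * K) ^ (-(1 / (p - 1))) := by
  have hmono := monotoneOn_rpow_one_sub_add_mul_of_deriv_le hp hy hΓ hy0 hy' self_mem_Ici ht ht
  have hΓK := mul_le_mul_of_nonneg_left (hK t ht) (sub_nonneg.2 hp.le)
  calc y t = (y t ^ (1 - p)) ^ (-(1 / (p - 1))) := by
        rw [← Real.rpow_mul (hy0 t ht).le, show (1 - p) * -(1 / (p - 1)) = 1 by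
          field_simp [(sub_pos.2 hp).ne']; ring, Real.rpow_one]
    _ ≤ (y 0 ^ (1 - p) - (p - 1) * K) ^ (-(1 / (p - 1))) := by
        refine Real.rpow_le_rpow_of_nonpos (by linarith) (by simp only at hmono; linarith) ?_
        have : 0 < 1 / (p - 1) := one_div_pos.2 (sub_pos.2 hp)
        linarith

theorem norm_add_le_of_norm_deriv_le_mul_rpow {E : Type*} [NormedAddCommGroup E] [NormedSpace ℝ E]
    {w w' : ℝ → E} {g : ℝ → ℝ} {a p K : ℝ} (hp : 1 < p) (ha : 0 < a)
    (hw : ∀ t, 0 ≤ t → HasDerivAt w (w' t) t) (hg : ContinuousOn g (Ici 0))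
    (hw' : ∀ t, 0 ≤ t → ‖w' t‖ ≤ g t * (‖w t‖ + a) ^ p)
    (hK : ∀ t, 0 ≤ t → ∫ s in (0)..t, g s ≤ K) (hδ : (p - 1) * K < (‖w 0‖ + a) ^ (1 - p))
    {t : ℝ} (ht : 0 ≤ t) :
    ‖w t‖ + a ≤ ((‖w 0‖ + a) ^ (1 - p) - (p - 1) * K) ^ (-(1 / (p - 1))) := by
  have hwc : ContinuousOn w (Ici 0) := fun t ht => (hw t ht).continuousAt.continuousWithinAt
  -- extending the integrands by their values at `0` makes the primitives differentiable everywhere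
  have hmax : Continuous fun s : ℝ => max s 0 := continuous_id.max continuous_const
  have hgc : Continuous fun s => g (max s 0) := hg.comp_continuous hmax (le_max_right · 0)
  have hkc : Continuous fun s => g (max s 0) * (‖w (max s 0)‖ + a) ^ p :=
    hgc.mul (((hwc.comp_continuous hmax (le_max_right · 0)).norm.add continuous_const).rpow_const
      fun _ => Or.inr (by linarith))
  set y : ℝ → ℝ := fun t => ‖w 0‖ + ∫ s in (0)..t, g (max s 0) * (‖w (max s 0)‖ + a) ^ p
  have hy : ∀ t, HasDerivAt y (g (max t 0) * (‖w (max t 0)‖ + a) ^ p) t := fun t =>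
    ((hkc.integral_hasStrictDerivAt 0 t).hasDerivAt).const_add _
  have hwy : ∀ t, 0 ≤ t → ‖w t‖ ≤ y t := fun t ht =>
    image_norm_le_of_norm_deriv_right_le_deriv_boundary
      (hwc.mono Icc_subset_Ici_self) (fun s hs => (hw s hs.1).hasDerivWithinAt)
      (by simp [y]) hy (fun s hs => by simpa [max_eq_left hs.1] using hw' s hs.1) ⟨ht, le_rfl⟩
  have hg0 : ∀ t, 0 ≤ t → 0 ≤ g t := fun t ht =>
    nonneg_of_mul_nonneg_left ((norm_nonneg _).trans (hw' t ht))
      (Real.rpow_pos_of_pos (by positivity) p)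
  have hΓ : ∀ t, 0 ≤ t → ∫ s in (0)..t, g (max s 0) = ∫ s in (0)..t, g s := fun t ht =>
    intervalIntegral.integral_congr fun s hs => by
      rw [uIcc_of_le ht] at hs
      simp only [max_eq_left hs.1]
  have hbound := le_rpow_of_deriv_le_mul_rpow (y := fun t => y t + a) (K := K) hp
    (fun t _ => (hy t).add_const a)
    (fun t _ => (hgc.integral_hasStrictDerivAt 0 t).hasDerivAt)
    (fun t ht => by linarith [(norm_nonneg (w t)).trans (hwy t ht)])
    (fun t ht => by
      simp only [max_eq_left ht]
      gcongr
      exacts [hg0 t ht, hwy t ht])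
    (fun t ht => by simpa [hΓ t ht] using hK t ht)
    (by simpa [y] using hδ) ht
  simp only [y, intervalIntegral.integral_same, add_zero] at hbound
  linarith [hwy t ht]

theorem half_mul_rpow_neg_one_div_sub_one_rpow {x : ℝ} (hx : 0 ≤ x) (p : ℝ) :
    (1 / 2 * x ^ (-(1 / (p - 1)))) ^ p = (1 / 2) ^ p * x ^ (-(p / (p - 1))) := by
  rw [Real.mul_rpow (by norm_num) (Real.rpow_nonneg hx _), ← Real.rpow_mul hx]
  congr 2
  ring

theorem lt_rpow_one_sub_of_lt_half_mul_rpow_neg {x p r : ℝ} (hx : 0 < x) (hp : 1 < p)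
    (hr : 0 ≤ r) (hrx : r < 1 / 2 * x ^ (-(1 / (p - 1)))) :
    x < (r + 1 / 2 * x ^ (-(1 / (p - 1)))) ^ (1 - p) := by
  have hb : 0 < x ^ (-(1 / (p - 1))) := Real.rpow_pos_of_pos hx _
  calc x = (x ^ (-(1 / (p - 1)))) ^ (1 - p) := by
        rw [← Real.rpow_mul hx.le, show -(1 / (p - 1)) * (1 - p) = 1 by
          field_simp [(sub_pos.2 hp).ne']; ring, Real.rpow_one]
    _ < (r + 1 / 2 * x ^ (-(1 / (p - 1)))) ^ (1 - p) :=
        Real.rpow_lt_rpow_of_neg (by positivity) (by linarith) (by linarith)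

section Propagator

variable {X : Type*} [NormedAddCommGroup X] [NormedSpace ℝ X]

theorem hasDerivAt_apply_of_hasDerivAt_neg_comp {V B : ℝ → X →L[ℝ] X} {u : ℝ → X} {r : X}
    {t : ℝ} (hV : HasDerivAt V (-((V t).comp (B t))) t) (hu : HasDerivAt u (B t (u t) + r) t) :
    HasDerivAt (fun s => V s (u s)) (V t r) t := by
  convert hV.clm_apply hu using 1
  simp

theorem norm_le_opNorm_mul_of_comp_eq_one {U V : X →L[ℝ] X} (hUV : U.comp V = 1) (x : X) :
    ‖x‖ ≤ ‖U‖ * ‖V x‖ := by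
  simpa [← ContinuousLinearMap.comp_apply, hUV] using U.le_opNorm (V x)

theorem norm_apply_add_le_of_comp_eq_one {U V : X →L[ℝ] X} {u G f : X} {α β a p : ℝ}
    (hp : 1 ≤ p) (ha : 0 ≤ a) (hα : 0 ≤ α) (hUV : U.comp V = 1)
    (hG : ‖G‖ ≤ α * ‖u‖ ^ p) (hf : ‖f‖ ≤ β) (hβ : β ≤ α * ‖U‖ ^ p * a ^ p) :
    ‖V (G + f)‖ ≤ α * ‖V‖ * ‖U‖ ^ p * (‖V u‖ + a) ^ p := by
  have hu : ‖u‖ ^ p ≤ ‖U‖ ^ p * ‖V u‖ ^ p := by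
    rw [← Real.mul_rpow (norm_nonneg _) (norm_nonneg _)]
    gcongr
    exact norm_le_opNorm_mul_of_comp_eq_one hUV u
  calc ‖V (G + f)‖ ≤ ‖V‖ * (‖G‖ + ‖f‖) := (V.le_opNorm _).trans (by gcongr; exact norm_add_le _ _)
    _ ≤ ‖V‖ * (α * (‖U‖ ^ p * ‖V u‖ ^ p) + α * ‖U‖ ^ p * a ^ p) := by
        gcongr
        · linarith [mul_le_mul_of_nonneg_left hu hα]
        · exact hf.trans hβ
    _ = α * ‖V‖ * ‖U‖ ^ p * (‖V u‖ ^ p + a ^ p) := by ring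
    _ ≤ α * ‖V‖ * ‖U‖ ^ p * (‖V u‖ + a) ^ p := by
        gcongr
        exact Real.add_rpow_le_rpow_add (norm_nonneg _) ha hp

end Propagator

theorem stmt7_general
    {X : Type*} [NormedAddCommGroup X] [NormedSpace ℝ X]
    (B U V : ℝ → X →L[ℝ] X)
    (hV0 : V 0 = 1)
    (hUV : ∀ t, 0 ≤ t → (U t).comp (V t) = 1)
    (hUd : ∀ t, 0 ≤ t → HasDerivAt U ((B t).comp (U t)) t)
    (hVd : ∀ t, 0 ≤ t → HasDerivAt V (-((V t).comp (B t))) t)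
    (p : ℝ) (hp : 1 < p)
    (α β : ℝ → ℝ) (hαc : Continuous α)
    (hα0 : ∀ t, 0 ≤ α t)
    (u G f : ℝ → X) (u₀ : X) (hu0 : u 0 = u₀)
    (hud : ∀ t, 0 ≤ t → HasDerivAt u (B t (u t) + G t + f t) t)
    (hGb : ∀ t, 0 ≤ t → ‖G t‖ ≤ α t * ‖u t‖ ^ p)
    (hfb : ∀ t, 0 ≤ t → ‖f t‖ ≤ β t)
    (hUlim : Tendsto (fun t => ‖U t‖) atTop (nhds 0))
    (hαint : IntegrableOn α (Set.Ioi (0:ℝ)))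
    (c : ℝ)
    (hVUc : ∀ t, 0 ≤ t → ‖V t‖ * ‖U t‖ ≤ c) :
    IntegrableOn (fun ξ => α ξ * ‖V ξ‖ * ‖U ξ‖ ^ p) (Set.Ioi (0:ℝ)) ∧
    ∀ J : ℝ, J = (∫ ξ in Set.Ioi (0:ℝ), α ξ * ‖V ξ‖ * ‖U ξ‖ ^ p) → 0 < J →
      (∀ t, 0 ≤ t →
        β t ≤ α t * ‖U t‖ ^ p * (1 / 2 : ℝ) ^ p * ((p - 1) * J) ^ (-(p / (p - 1)))) →
      0 < ‖u₀‖ → ‖u₀‖ < (1 / 2) * ((p - 1) * J) ^ (-(1 / (p - 1))) →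
      Tendsto u atTop (nhds 0) := by
  have hUc : ContinuousOn U (Ici 0) := fun t ht => (hUd t ht).continuousAt.continuousWithinAt
  have hVc : ContinuousOn V (Ici 0) := fun t ht => (hVd t ht).continuousAt.continuousWithinAt
  set g : ℝ → ℝ := fun ξ => α ξ * ‖V ξ‖ * ‖U ξ‖ ^ p
  have hgc : ContinuousOn g (Ici 0) :=
    (hαc.continuousOn.mul hVc.norm).mul (hUc.norm.rpow_const fun _ _ => Or.inr (by linarith))
  have hgint : IntegrableOn g (Ioi 0) :=
    integrableOn_mul_mul_rpow_of_mul_le measurableSet_Ioi hp.le hαint (fun t _ => hα0 t)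
      ((hgc.mono Ioi_subset_Ici_self).aestronglyMeasurable measurableSet_Ioi)
      (fun _ _ => norm_nonneg _) (fun _ _ => norm_nonneg _)
      ((hUc.norm.bddAbove_image_Ici_of_tendsto hUlim).mono (image_mono Ioi_subset_Ici_self))
      (fun t ht => hVUc t (le_of_lt ht))
  refine ⟨hgint, fun J hJ hJpos hβ _ hu₀ => ?_⟩
  have hpJ : 0 < (p - 1) * J := mul_pos (sub_pos.2 hp) hJpos
  set a := 1 / 2 * ((p - 1) * J) ^ (-(1 / (p - 1)))
  have hw' : ∀ t, 0 ≤ t → ‖V t (G t + f t)‖ ≤ g t * (‖V t (u t)‖ + a) ^ p := fun t ht =>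
    norm_apply_add_le_of_comp_eq_one hp.le (by positivity) (hα0 t) (hUV t ht) (hGb t ht) (hfb t ht)
      (by rw [half_mul_rpow_neg_one_div_sub_one_rpow hpJ.le, ← mul_assoc]; exact hβ t ht)
  have hδ : (p - 1) * J < (‖V 0 (u 0)‖ + a) ^ (1 - p) := by
    rw [hV0, hu0, one_apply_eq_self]
    exact lt_rpow_one_sub_of_lt_half_mul_rpow_neg hpJ hp (norm_nonneg _) hu₀
  have hw : ∀ t, 0 ≤ t → HasDerivAt (fun s => V s (u s)) (V t (G t + f t)) t := fun t ht =>
    hasDerivAt_apply_of_hasDerivAt_neg_comp (hVd t ht) (by simpa only [add_assoc] using hud t ht)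
  have hK : ∀ t, 0 ≤ t → ∫ s in (0)..t, g s ≤ J := fun t ht =>
    hJ ▸ intervalIntegral_le_integral_Ioi hgint (fun s _ => by positivity [hα0 s]) ht
  obtain ⟨R, hR⟩ : ∃ R, ∀ t, 0 ≤ t → ‖V t (u t)‖ ≤ R := ⟨_, fun t ht =>
    le_of_add_le_of_nonneg_left
      (norm_add_le_of_norm_deriv_le_mul_rpow hp (by positivity) hw hgc hw' hK hδ ht)
      (by positivity)⟩
  refine tendsto_zero_iff_norm_tendsto_zero.2 (squeeze_zero' (.of_forall fun t => norm_nonneg _)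
    ?_ (by simpa using hUlim.mul_const R))
  filter_upwards [eventually_ge_atTop 0] with t ht
  exact (norm_le_opNorm_mul_of_comp_eq_one (hUV t ht) (u t)).trans (by gcongr; exact hR t ht)

theorem stmt7
    {X : Type*} [NormedAddCommGroup X] [NormedSpace ℝ X] [CompleteSpace X]
    (B U V : ℝ → X →L[ℝ] X)
    (hB : Continuous B)
    (hU0 : U 0 = 1) (hV0 : V 0 = 1)
    (hVU : ∀ t, 0 ≤ t → (V t).comp (U t) = 1)
    (hUV : ∀ t, 0 ≤ t → (U t).comp (V t) = 1)
    (hUd : ∀ t, 0 ≤ t → HasDerivAt U ((B t).comp (U t)) t)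
    (hVd : ∀ t, 0 ≤ t → HasDerivAt V (-((V t).comp (B t))) t)
    (p : ℝ) (hp : 1 < p)
    (α β : ℝ → ℝ) (hαc : Continuous α) (hβc : Continuous β)
    (hα0 : ∀ t, 0 ≤ α t) (hβ0 : ∀ t, 0 ≤ β t)
    (u G f : ℝ → X) (u₀ : X) (hu0 : u 0 = u₀)
    (hGc : ContinuousOn G (Set.Ici 0))
    (hfc : ContinuousOn f (Set.Ici 0))
    (hud : ∀ t, 0 ≤ t → HasDerivAt u (B t (u t) + G t + f t) t)
    (hGb : ∀ t, 0 ≤ t → ‖G t‖ ≤ α t * ‖u t‖ ^ p)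
    (hfb : ∀ t, 0 ≤ t → ‖f t‖ ≤ β t)
    (hVud : ∀ t, 0 ≤ t → DifferentiableAt ℝ (fun s => ‖V s (u s)‖) t)
    (hUlim : Tendsto (fun t => ‖U t‖) atTop (nhds 0))
    (hαint : IntegrableOn α (Set.Ioi (0:ℝ)))
    (hαpos : 0 < ∫ ξ in Set.Ioi (0:ℝ), α ξ)
    (c : ℝ) (hc : 0 < c)
    (hVUc : ∀ t, 0 ≤ t → ‖V t‖ * ‖U t‖ ≤ c) :
    IntegrableOn (fun ξ => α ξ * ‖V ξ‖ * ‖U ξ‖ ^ p) (Set.Ioi (0:ℝ)) ∧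
    ∀ J : ℝ, J = (∫ ξ in Set.Ioi (0:ℝ), α ξ * ‖V ξ‖ * ‖U ξ‖ ^ p) → 0 < J →
      (∀ t, 0 ≤ t →
        β t ≤ α t * ‖U t‖ ^ p * (1 / 2 : ℝ) ^ p * ((p - 1) * J) ^ (-(p / (p - 1)))) →
      0 < ‖u₀‖ → ‖u₀‖ < (1 / 2) * ((p - 1) * J) ^ (-(1 / (p - 1))) →
      Tendsto u atTop (nhds 0) :=
  stmt7_general B U V hV0 hUV hUd hVd p hp α β hαc hα0 u G f u₀ hu0 hud hGb hfb hUlim hαint c hVUc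
end

section
/- (Scalar bootstrap lemma underlying Theorem 2.4.) Let T ∈ (0,∞], p > 1, κ > 0. Let k : ℝ × ℝ → ℝ be continuous and nonnegative, let a, α, β : [0,T) → ℝ be continuous and nonnegative, and define ζ(t) := a(t) + ∫₀ᵗ k(t,ξ)·β(ξ) dξ. Assume ζ(t) > 0 and α(t)·((κ+1)·ζ(t))^p ≤ κ·β(t) for all t ∈ [0,T). If g : [0,T) → ℝ is continuous, nonnegative, and satisfies g(t) ≤ a(t) + ∫₀ᵗ k(t,ξ)·(α(ξ)·g(ξ)^p + β(ξ)) dξ for all t ∈ [0,T), then g(t) < (κ+1)·ζ(t) for all t ∈ [0,T). -/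
open MeasureTheory Filter
open Topology
open scoped ENNReal

theorem stmt8 (T : ℝ≥0∞) (hT : 0 < T) (p κ : ℝ) (hp : 1 < p) (hκ : 0 < κ)
    (k : ℝ × ℝ → ℝ) (hkc : Continuous k) (hk0 : ∀ x, 0 ≤ k x)
    (a α β : ℝ → ℝ)
    (hac : ContinuousOn a {t : ℝ | 0 ≤ t ∧ ENNReal.ofReal t < T})
    (hαc : ContinuousOn α {t : ℝ | 0 ≤ t ∧ ENNReal.ofReal t < T})
    (hβc : ContinuousOn β {t : ℝ | 0 ≤ t ∧ ENNReal.ofReal t < T})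
    (ha0 : ∀ t, 0 ≤ t → ENNReal.ofReal t < T → 0 ≤ a t)
    (hα0 : ∀ t, 0 ≤ t → ENNReal.ofReal t < T → 0 ≤ α t)
    (hβ0 : ∀ t, 0 ≤ t → ENNReal.ofReal t < T → 0 ≤ β t)
    (ζ : ℝ → ℝ) (hζ : ∀ t, ζ t = a t + ∫ ξ in (0:ℝ)..t, k (t, ξ) * β ξ)
    (hζpos : ∀ t, 0 ≤ t → ENNReal.ofReal t < T → 0 < ζ t)
    (hκβ : ∀ t, 0 ≤ t → ENNReal.ofReal t < T → α t * ((κ + 1) * ζ t) ^ p ≤ κ * β t)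
    (g : ℝ → ℝ)
    (hgc : ContinuousOn g {t : ℝ | 0 ≤ t ∧ ENNReal.ofReal t < T})
    (hg0 : ∀ t, 0 ≤ t → ENNReal.ofReal t < T → 0 ≤ g t)
    (hgle : ∀ t, 0 ≤ t → ENNReal.ofReal t < T →
      g t ≤ a t + ∫ ξ in (0:ℝ)..t, k (t, ξ) * (α ξ * g ξ ^ p + β ξ)) :
    ∀ t, 0 ≤ t → ENNReal.ofReal t < T → g t < (κ + 1) * ζ t := by
  intro t₀ ht₀0 ht₀T
  -- membership of `Icc 0 t₀` in the strip
  have hstrip : ∀ s ∈ Set.Icc (0:ℝ) t₀, 0 ≤ s ∧ ENNReal.ofReal s < T := by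
    intro s hs
    exact ⟨hs.1, lt_of_le_of_lt (ENNReal.ofReal_le_ofReal hs.2) ht₀T⟩
  have hIccsub : Set.Icc (0:ℝ) t₀ ⊆ {t : ℝ | 0 ≤ t ∧ ENNReal.ofReal t < T} := by
    intro s hs; exact hstrip s hs
  -- continuity of ζ on Icc 0 t₀
  set βe : ℝ → ℝ := fun x => β (min (max x 0) t₀) with hβe
  have hclamp : Continuous fun x : ℝ => min (max x 0) t₀ :=
    (continuous_id.max continuous_const).min continuous_const
  have hclamp_mem : ∀ x : ℝ, min (max x 0) t₀ ∈ Set.Icc (0:ℝ) t₀ := by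
    intro x
    exact ⟨le_min (le_max_right _ _) ht₀0, min_le_right _ _⟩
  have hβec : Continuous βe := by
    apply (hβc.mono hIccsub).comp_continuous hclamp hclamp_mem
  have hβe_eq : ∀ x ∈ Set.Icc (0:ℝ) t₀, βe x = β x := by
    intro x hx
    simp only [hβe, max_eq_left hx.1, min_eq_left hx.2]
  have hGc : Continuous fun s : ℝ => ∫ ξ in (0:ℝ)..s, k (s, ξ) * βe ξ := by
    exact intervalIntegral.continuous_parametric_intervalIntegral_of_continuous
      (f := fun s ξ => k (s, ξ) * βe ξ) (hkc.mul (hβec.comp continuous_snd)) continuous_id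
  have hζeq : ∀ s ∈ Set.Icc (0:ℝ) t₀,
      ζ s = a s + ∫ ξ in (0:ℝ)..s, k (s, ξ) * βe ξ := by
    intro s hs
    rw [hζ s]
    congr 1
    apply intervalIntegral.integral_congr
    intro x hx
    rw [Set.uIcc_of_le hs.1] at hx
    simp only [hβe_eq x (Set.Icc_subset_Icc_right hs.2 hx)]
  have hζc : ContinuousOn ζ (Set.Icc (0:ℝ) t₀) :=
    ContinuousOn.congr ((hac.mono hIccsub).add hGc.continuousOn) hζeq
  have hgcI : ContinuousOn g (Set.Icc (0:ℝ) t₀) := hgc.mono hIccsub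
  -- the auxiliary function
  set h : ℝ → ℝ := fun s => (κ + 1) * ζ s - g s with hh
  have hhc : ContinuousOn h (Set.Icc (0:ℝ) t₀) :=
    (continuousOn_const.mul hζc).sub hgcI
  have hT0 : ENNReal.ofReal (0:ℝ) < T := by simpa using hT
  have hζ0 : ζ 0 = a 0 := by rw [hζ 0]; simp
  have hg00 : g 0 ≤ a 0 := by
    have := hgle 0 le_rfl hT0; simpa using this
  have hh0 : 0 < h 0 := by
    have ha0' : 0 < a 0 := by
      have := hζpos 0 le_rfl hT0; rwa [hζ0] at this
    simp only [hh, hζ0]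
    nlinarith
  by_contra hcon
  push_neg at hcon
  -- the bad set
  set S : Set ℝ := Set.Icc (0:ℝ) t₀ ∩ h ⁻¹' Set.Iic 0 with hS
  have hSne : S.Nonempty := by
    refine ⟨t₀, ⟨ht₀0, le_rfl⟩, ?_⟩
    simp only [Set.mem_preimage, Set.mem_Iic, hh]
    linarith
  have hScl : IsClosed S :=
    hhc.preimage_isClosed_of_isClosed isClosed_Icc isClosed_Iic
  have hSbdd : BddBelow S := ⟨0, fun x hx => hx.1.1⟩
  set c : ℝ := sInf S with hc
  have hcS : c ∈ S := hScl.csInf_mem hSne hSbdd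
  have hcI : c ∈ Set.Icc (0:ℝ) t₀ := hcS.1
  have hch : h c ≤ 0 := hcS.2
  have hcne : c ≠ 0 := by
    intro h0
    rw [h0] at hch; linarith
  have hcpos : 0 < c := lt_of_le_of_ne hcI.1 (Ne.symm hcne)
  -- below c, h is positive
  have hbelow : ∀ s ∈ Set.Ico (0:ℝ) c, 0 < h s := by
    intro s hs
    by_contra hns
    push_neg at hns
    have hsS : s ∈ S := ⟨⟨hs.1, le_trans hs.2.le hcI.2⟩, hns⟩
    exact absurd (csInf_le hSbdd hsS) (not_le.mpr hs.2)
  -- by continuity, h c ≥ 0, hence g c ≤ (κ+1) ζ c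
  have hhc0 : 0 ≤ h c := by
    have hsub : Set.Ico (0:ℝ) c ⊆ Set.Icc (0:ℝ) t₀ :=
      fun x hx => ⟨hx.1, le_trans hx.2.le hcI.2⟩
    have hcw : ContinuousWithinAt h (Set.Ico (0:ℝ) c) c :=
      ((hhc c hcI).mono hsub)
    have hne : (𝓝[Set.Ico (0:ℝ) c] c).NeBot := by
      rw [← mem_closure_iff_nhdsWithin_neBot, closure_Ico hcne.symm]
      exact ⟨hcpos.le, le_rfl⟩
    refine ge_of_tendsto hcw ?_
    filter_upwards [self_mem_nhdsWithin] with x hx using (hbelow x hx).le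
  -- key pointwise bound on [0,c]
  have hkey : ∀ ξ ∈ Set.Icc (0:ℝ) c, g ξ ≤ (κ + 1) * ζ ξ := by
    intro ξ hξ
    rcases lt_or_eq_of_le hξ.2 with hlt | heq
    · have := hbelow ξ ⟨hξ.1, hlt⟩; simp only [hh] at this; linarith
    · subst heq; simp only [hh] at hhc0; linarith
  have hIccc : Set.Icc (0:ℝ) c ⊆ Set.Icc (0:ℝ) t₀ :=
    Set.Icc_subset_Icc_right hcI.2
  have hstripc : ∀ ξ ∈ Set.Icc (0:ℝ) c, 0 ≤ ξ ∧ ENNReal.ofReal ξ < T :=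
    fun ξ hξ => hstrip ξ (hIccc hξ)
  -- pointwise: α ξ * g ξ ^ p + β ξ ≤ (κ+1) * β ξ on [0,c]
  have hptle : ∀ ξ ∈ Set.Icc (0:ℝ) c, α ξ * g ξ ^ p + β ξ ≤ (κ + 1) * β ξ := by
    intro ξ hξ
    obtain ⟨hξ0, hξT⟩ := hstripc ξ hξ
    have h1 : g ξ ^ p ≤ ((κ + 1) * ζ ξ) ^ p :=
      Real.rpow_le_rpow (hg0 ξ hξ0 hξT) (hkey ξ hξ) (by linarith)
    have h2 : α ξ * g ξ ^ p ≤ α ξ * ((κ + 1) * ζ ξ) ^ p :=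
      mul_le_mul_of_nonneg_left h1 (hα0 ξ hξ0 hξT)
    have h3 := hκβ ξ hξ0 hξT
    linarith
  -- continuity of the two integrands on Icc 0 c
  have hkcc : ContinuousOn (fun ξ : ℝ => k (c, ξ)) (Set.Icc (0:ℝ) c) :=
    (hkc.comp (continuous_const.prodMk continuous_id)).continuousOn
  have hαcc : ContinuousOn α (Set.Icc (0:ℝ) c) := (hαc.mono hIccsub).mono hIccc
  have hβcc : ContinuousOn β (Set.Icc (0:ℝ) c) := (hβc.mono hIccsub).mono hIccc
  have hgcc : ContinuousOn g (Set.Icc (0:ℝ) c) := hgcI.mono hIccc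
  have hgp : ContinuousOn (fun ξ : ℝ => g ξ ^ p) (Set.Icc (0:ℝ) c) :=
    hgcc.rpow_const (fun x _ => Or.inr (by linarith))
  have hF1c : ContinuousOn (fun ξ : ℝ => k (c, ξ) * (α ξ * g ξ ^ p + β ξ))
      (Set.Icc (0:ℝ) c) := hkcc.mul ((hαcc.mul hgp).add hβcc)
  have hF2c : ContinuousOn (fun ξ : ℝ => k (c, ξ) * ((κ + 1) * β ξ))
      (Set.Icc (0:ℝ) c) := hkcc.mul (continuousOn_const.mul hβcc)
  have hkβc : ContinuousOn (fun ξ : ℝ => k (c, ξ) * β ξ) (Set.Icc (0:ℝ) c) :=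
    hkcc.mul hβcc
  obtain ⟨hc0, hcT⟩ := hstrip c hcI
  -- the integral estimate
  have hInt1 : (∫ ξ in (0:ℝ)..c, k (c, ξ) * (α ξ * g ξ ^ p + β ξ)) ≤
      ∫ ξ in (0:ℝ)..c, k (c, ξ) * ((κ + 1) * β ξ) := by
    apply intervalIntegral.integral_mono_on hc0
      (hF1c.intervalIntegrable_of_Icc hc0) (hF2c.intervalIntegrable_of_Icc hc0)
    intro ξ hξ
    exact mul_le_mul_of_nonneg_left (hptle ξ hξ) (hk0 _)
  have hInt2 : (∫ ξ in (0:ℝ)..c, k (c, ξ) * ((κ + 1) * β ξ)) =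
      (κ + 1) * ∫ ξ in (0:ℝ)..c, k (c, ξ) * β ξ := by
    rw [← intervalIntegral.integral_const_mul]
    apply intervalIntegral.integral_congr
    intro x _; ring
  have hgle_c := hgle c hc0 hcT
  have hIkβ0 : 0 ≤ ∫ ξ in (0:ℝ)..c, k (c, ξ) * β ξ := by
    apply intervalIntegral.integral_nonneg hc0
    intro u hu
    exact mul_nonneg (hk0 _) (hβ0 u (hstripc u hu).1 (hstripc u hu).2)
  have hζc_eq : ζ c = a c + ∫ ξ in (0:ℝ)..c, k (c, ξ) * β ξ := hζ c
  have hζc_pos : 0 < ζ c := hζpos c hc0 hcT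
  have hgc_ge : (κ + 1) * ζ c ≤ g c := by simp only [hh] at hch; linarith
  have hac_nonneg : 0 ≤ a c := ha0 c hc0 hcT
  -- case split: a c > 0 or the integral is positive
  rcases lt_or_eq_of_le hac_nonneg with hacpos | haczero
  · -- a c > 0 : already a contradiction from the non-strict estimate
    have : g c ≤ a c + (κ + 1) * ∫ ξ in (0:ℝ)..c, k (c, ξ) * β ξ := by
      calc g c ≤ a c + ∫ ξ in (0:ℝ)..c, k (c, ξ) * (α ξ * g ξ ^ p + β ξ) := hgle_c
        _ ≤ a c + ∫ ξ in (0:ℝ)..c, k (c, ξ) * ((κ + 1) * β ξ) := by linarith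
        _ = a c + (κ + 1) * ∫ ξ in (0:ℝ)..c, k (c, ξ) * β ξ := by rw [hInt2]
    nlinarith
  · -- a c = 0 : the integral ∫ kβ is positive; find a strict point
    have hIkβpos : 0 < ∫ ξ in (0:ℝ)..c, k (c, ξ) * β ξ := by
      rw [hζc_eq, ← haczero] at hζc_pos; linarith
    -- find ξ₀ ∈ Ico 0 c with k(c,ξ₀) * β ξ₀ > 0
    have hξ₀ : ∃ ξ₀ ∈ Set.Ico (0:ℝ) c, 0 < k (c, ξ₀) * β ξ₀ := by
      by_contra hno
      push_neg at hno
      have hzero : ∀ x ∈ Set.Ico (0:ℝ) c, k (c, x) * β x = 0 := by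
        intro x hx
        exact le_antisymm (hno x hx)
          (mul_nonneg (hk0 _) (hβ0 x (hstripc x ⟨hx.1, hx.2.le⟩).1
            (hstripc x ⟨hx.1, hx.2.le⟩).2))
      -- by continuity the integrand vanishes at c too, hence on all of Icc
      have hzc : k (c, c) * β c = 0 := by
        have hcw : ContinuousWithinAt (fun ξ => k (c, ξ) * β ξ)
            (Set.Ico (0:ℝ) c) c :=
          (hkβc c (Set.right_mem_Icc.mpr hc0)).mono Set.Ico_subset_Icc_self
        have hne : (𝓝[Set.Ico (0:ℝ) c] c).NeBot := by
          rw [← mem_closure_iff_nhdsWithin_neBot, closure_Ico hcne.symm]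
          exact ⟨hcpos.le, le_rfl⟩
        have : Tendsto (fun ξ => k (c, ξ) * β ξ) (𝓝[Set.Ico (0:ℝ) c] c)
            (𝓝 (k (c, c) * β c)) := hcw
        refine tendsto_nhds_unique this ?_
        refine Tendsto.congr' ?_ tendsto_const_nhds
        filter_upwards [self_mem_nhdsWithin] with x hx using (hzero x hx).symm
      have : (∫ ξ in (0:ℝ)..c, k (c, ξ) * β ξ) = 0 := by
        rw [intervalIntegral.integral_congr (g := fun _ => (0:ℝ)) ?_]
        · simp
        · intro x hx
          rw [Set.uIcc_of_le hc0] at hx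
          rcases lt_or_eq_of_le hx.2 with hlt | heq
          · exact hzero x ⟨hx.1, hlt⟩
          · subst heq; exact hzc
      linarith
    obtain ⟨ξ₀, hξ₀I, hξ₀pos⟩ := hξ₀
    have hξ₀0 := (hstripc ξ₀ ⟨hξ₀I.1, hξ₀I.2.le⟩).1
    have hξ₀T := (hstripc ξ₀ ⟨hξ₀I.1, hξ₀I.2.le⟩).2
    have hkξ₀ : 0 < k (c, ξ₀) := by
      rcases lt_or_eq_of_le (hk0 (c, ξ₀)) with h' | h'
      · exact h'
      · exfalso; rw [← h'] at hξ₀pos; simp at hξ₀pos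
    have hβξ₀ : 0 < β ξ₀ := by
      rcases lt_or_eq_of_le (hβ0 ξ₀ hξ₀0 hξ₀T) with h' | h'
      · exact h'
      · exfalso; rw [← h', mul_zero] at hξ₀pos; simp at hξ₀pos
    -- strict pointwise inequality at ξ₀
    have hstrict : α ξ₀ * g ξ₀ ^ p + β ξ₀ < (κ + 1) * β ξ₀ := by
      have hginq : g ξ₀ < (κ + 1) * ζ ξ₀ := by
        have := hbelow ξ₀ hξ₀I; simp only [hh] at this; linarith
      rcases lt_or_eq_of_le (hα0 ξ₀ hξ₀0 hξ₀T) with hαpos | hαzero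
      · have h1 : g ξ₀ ^ p < ((κ + 1) * ζ ξ₀) ^ p :=
          Real.rpow_lt_rpow (hg0 ξ₀ hξ₀0 hξ₀T) hginq (by linarith)
        have h2 : α ξ₀ * g ξ₀ ^ p < α ξ₀ * ((κ + 1) * ζ ξ₀) ^ p :=
          (mul_lt_mul_iff_right₀ hαpos).mpr h1
        have h3 := hκβ ξ₀ hξ₀0 hξ₀T
        nlinarith
      · rw [← hαzero]; nlinarith
    have hInt1' : (∫ ξ in (0:ℝ)..c, k (c, ξ) * (α ξ * g ξ ^ p + β ξ)) <
        ∫ ξ in (0:ℝ)..c, k (c, ξ) * ((κ + 1) * β ξ) := by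
      apply intervalIntegral.integral_lt_integral_of_continuousOn_of_le_of_exists_lt
        hcpos hF1c hF2c
      · intro x hx
        exact mul_le_mul_of_nonneg_left
          (hptle x ⟨hx.1.le, hx.2⟩) (hk0 _)
      · refine ⟨ξ₀, ⟨hξ₀I.1, hξ₀I.2.le⟩, ?_⟩
        exact (mul_lt_mul_iff_right₀ hkξ₀).mpr hstrict
    have : g c < a c + (κ + 1) * ∫ ξ in (0:ℝ)..c, k (c, ξ) * β ξ := by
      calc g c ≤ a c + ∫ ξ in (0:ℝ)..c, k (c, ξ) * (α ξ * g ξ ^ p + β ξ) := hgle_c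
        _ < a c + ∫ ξ in (0:ℝ)..c, k (c, ξ) * ((κ + 1) * β ξ) := by linarith
        _ = a c + (κ + 1) * ∫ ξ in (0:ℝ)..c, k (c, ξ) * β ξ := by rw [hInt2]
    nlinarith
end

section
/- (Theorem 2.4, a priori estimate.) Under the propagator setup and the solution setup, assume u₀ ≠ 0, let κ > 0, define ζ(t) := ‖U(t)‖·‖u₀‖ + ∫₀ᵗ ‖U(t)∘V(ξ)‖·β(ξ) dξ, and assume α(t)·((κ+1)·ζ(t))^p ≤ κ·β(t) for all t ≥ 0. Then ‖u(t)‖ < (κ+1)·ζ(t) for all t ∈ [0,T). -/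
/-!
By Duhamel's formula `u t = U t u₀ + ∫₀ᵗ U t (V ξ (G ξ + f ξ)) dξ`. As long as
`‖u‖ ≤ (κ + 1) ζ` on `[0, t)`, the hypothesis `α ((κ + 1) ζ) ^ p ≤ κ β` absorbs the nonlinearity,
`‖G + f‖ ≤ (κ + 1) β`, and the formula gives `‖u t‖ ≤ (κ + 1) ζ t - κ ‖U t‖ ‖u₀‖ < (κ + 1) ζ t`.
Both sides being continuous, the bound cannot fail at a first time, so it holds throughout.
-/

open MeasureTheory Set
open scoped ENNReal

theorem ContinuousOn.pos_of_pos_on_Ico {α : Type*} [ConditionallyCompleteLinearOrder α]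
    [TopologicalSpace α] [OrderTopology α] {g : α → ℝ} {a b : α}
    (hg : ContinuousOn g (Icc a b))
    (hstep : ∀ s ∈ Icc a b, (∀ ξ ∈ Ico a s, 0 < g ξ) → 0 < g s) :
    ∀ s ∈ Icc a b, 0 < g s := by
  by_contra! hbad
  set A := Icc a b ∩ g ⁻¹' Iic 0
  have hA : IsCompact A :=
    isCompact_Icc.of_isClosed_subset (hg.preimage_isClosed_of_isClosed isClosed_Icc isClosed_Iic)
      inter_subset_left
  obtain ⟨s, hs, hgs⟩ := hbad
  have hfirst : sInf A ∈ A := hA.sInf_mem ⟨s, hs, hgs⟩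
  refine (hfirst.2 : g (sInf A) ≤ 0).not_gt (hstep _ hfirst.1 fun ξ hξ => ?_)
  by_contra! hξA
  exact hξ.2.not_ge (csInf_le ⟨a, fun x hx => hx.1.1⟩ ⟨⟨hξ.1, hξ.2.le.trans hfirst.1.2⟩, hξA⟩)

theorem ContinuousOn.intervalIntegral_parametric_Ici {E : Type*} [NormedAddCommGroup E]
    [NormedSpace ℝ E] {f : ℝ → ℝ → E} {a : ℝ}
    (hf : ContinuousOn (Function.uncurry f) (Ici a ×ˢ Ici a)) :
    ContinuousOn (fun t => ∫ ξ in a..t, f t ξ) (Ici a) := by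
  have hext : Continuous (Function.uncurry fun s ξ => f (max s a) (max ξ a)) :=
    hf.comp_continuous (by fun_prop : Continuous fun p : ℝ × ℝ => (max p.1 a, max p.2 a))
      fun p => ⟨le_max_right p.1 a, le_max_right p.2 a⟩
  refine (intervalIntegral.continuous_parametric_intervalIntegral_of_continuous
    (μ := volume) (a₀ := a) hext continuous_id).continuousOn.congr fun t ht => ?_
  refine intervalIntegral.integral_congr fun ξ hξ => ?_
  rw [uIcc_of_le ht] at hξ
  simp only [max_eq_left hξ.1, max_eq_left (mem_Ici.1 ht)]

theorem ContinuousOn.intervalIntegral_norm_comp_mul {E F G : Type*} [NormedAddCommGroup E]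
    [NormedSpace ℝ E] [NormedAddCommGroup F] [NormedSpace ℝ F] [NormedAddCommGroup G]
    [NormedSpace ℝ G] {U : ℝ → F →L[ℝ] G} {V : ℝ → E →L[ℝ] F} {β : ℝ → ℝ} {a : ℝ}
    (hU : ContinuousOn U (Ici a)) (hV : ContinuousOn V (Ici a)) (hβ : ContinuousOn β (Ici a)) :
    ContinuousOn (fun t => ∫ ξ in a..t, ‖(U t).comp (V ξ)‖ * β ξ) (Ici a) :=
  ContinuousOn.intervalIntegral_parametric_Ici <|
    ((hU.comp continuousOn_fst fun _ h => h.1).clm_comp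
      (hV.comp continuousOn_snd fun _ h => h.2)).norm.mul
        (hβ.comp continuousOn_snd fun _ h => h.2)

theorem norm_add_le_of_absorb {E : Type*} [SeminormedAddGroup E] {G f x : E} {a b ρ p κ : ℝ}
    (hp : 0 ≤ p) (ha : 0 ≤ a)
    (hG : ‖G‖ ≤ a * ‖x‖ ^ p) (hf : ‖f‖ ≤ b) (hx : ‖x‖ ≤ ρ) (habs : a * ρ ^ p ≤ κ * b) :
    ‖G + f‖ ≤ (κ + 1) * b := by
  have hGρ : ‖G‖ ≤ a * ρ ^ p := hG.trans (by gcongr)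
  linarith [norm_add_le G f]

theorem norm_integral_clm_apply_le {E F : Type*} [NormedAddCommGroup E] [NormedSpace ℝ E]
    [NormedAddCommGroup F] [NormedSpace ℝ F] {L : ℝ → E →L[ℝ] F} {w : ℝ → E} {c : ℝ → ℝ}
    {a b : ℝ}
    (hab : a ≤ b) (hL : ContinuousOn L (Icc a b)) (hw : ContinuousOn w (Icc a b))
    (hc : ContinuousOn c (Icc a b)) (hwc : ∀ ξ ∈ Ioo a b, ‖w ξ‖ ≤ c ξ) :
    ‖∫ ξ in a..b, L ξ (w ξ)‖ ≤ ∫ ξ in a..b, ‖L ξ‖ * c ξ := by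
  rw [← uIcc_of_le hab] at hL hw hc
  refine (intervalIntegral.norm_integral_le_integral_norm hab).trans <|
    intervalIntegral.integral_mono_on_of_le_Ioo hab (hL.clm_apply hw).norm.intervalIntegrable
      (hL.norm.mul hc).intervalIntegrable fun ξ hξ => ?_
  exact (L ξ).le_opNorm_of_le (hwc ξ hξ)

section Propagator

variable {X : Type*} [NormedAddCommGroup X] [NormedSpace ℝ X] [CompleteSpace X]

theorem duhamel_formula_s9 {B U V : ℝ → X →L[ℝ] X} {u F : ℝ → X} {a b : ℝ} (hab : a ≤ b)
    (hVa : V a = 1) (hUV : (U b).comp (V b) = 1)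
    (hV : ∀ ξ ∈ Icc a b, HasDerivAt V (-((V ξ).comp (B ξ))) ξ)
    (hu : ∀ ξ ∈ Icc a b, HasDerivAt u (B ξ (u ξ) + F ξ) ξ)
    (hF : ContinuousOn F (Icc a b)) :
    u b = U b (u a) + ∫ ξ in a..b, (U b).comp (V ξ) (F ξ) := by
  have hVc : ContinuousOn V (Icc a b) := fun ξ hξ => (hV ξ hξ).continuousAt.continuousWithinAt
  have hint : IntervalIntegrable (fun ξ => V ξ (F ξ)) volume a b :=
    ((hVc.clm_apply hF).mono (uIcc_of_le hab).subset).intervalIntegrable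
  -- `V` cancels the linear part of the equation, so `V ξ (u ξ)` has derivative `V ξ (F ξ)`.
  have hftc : ∫ ξ in a..b, V ξ (F ξ) = V b (u b) - u a := by
    rw [intervalIntegral.integral_eq_sub_of_hasDerivAt (f := fun ξ => V ξ (u ξ))
      (fun ξ hξ => ?_) hint, hVa]
    · rfl
    rw [uIcc_of_le hab] at hξ
    convert (hV ξ hξ).clm_apply (hu ξ hξ) using 1
    simp only [neg_apply, ContinuousLinearMap.comp_apply, map_add]
    abel
  calc u b = U b (V b (u b)) := by rw [← ContinuousLinearMap.comp_apply, hUV]; rfl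
    _ = U b (u a + ∫ ξ in a..b, V ξ (F ξ)) := by rw [hftc, add_sub_cancel]
    _ = U b (u a) + ∫ ξ in a..b, (U b).comp (V ξ) (F ξ) := by
      rw [map_add, ← (U b).intervalIntegral_comp_comm hint]; rfl

theorem norm_le_duhamel {B U V : ℝ → X →L[ℝ] X} {u F : ℝ → X} {c : ℝ → ℝ} {a b : ℝ}
    (hab : a ≤ b) (hVa : V a = 1) (hUV : (U b).comp (V b) = 1)
    (hV : ∀ ξ ∈ Icc a b, HasDerivAt V (-((V ξ).comp (B ξ))) ξ)
    (hu : ∀ ξ ∈ Icc a b, HasDerivAt u (B ξ (u ξ) + F ξ) ξ)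
    (hF : ContinuousOn F (Icc a b)) (hc : ContinuousOn c (Icc a b))
    (hFc : ∀ ξ ∈ Ioo a b, ‖F ξ‖ ≤ c ξ) :
    ‖u b‖ ≤ ‖U b‖ * ‖u a‖ + ∫ ξ in a..b, ‖(U b).comp (V ξ)‖ * c ξ := by
  have hVc : ContinuousOn V (Icc a b) := fun ξ hξ => (hV ξ hξ).continuousAt.continuousWithinAt
  rw [duhamel_formula_s9 hab hVa hUV hV hu hF]
  exact (norm_add_le _ _).trans <| add_le_add ((U b).le_opNorm _)
    (norm_integral_clm_apply_le hab (continuousOn_const.clm_comp hVc) hF hc hFc)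

end Propagator

theorem stmt9_general
    {X : Type*} [NormedAddCommGroup X] [NormedSpace ℝ X] [CompleteSpace X]
    (B U V : ℝ → X →L[ℝ] X)
    (hV0 : V 0 = 1)
    (hVU : ∀ t, 0 ≤ t → (V t).comp (U t) = 1)
    (hUV : ∀ t, 0 ≤ t → (U t).comp (V t) = 1)
    (hUd : ∀ t, 0 ≤ t → HasDerivAt U ((B t).comp (U t)) t)
    (hVd : ∀ t, 0 ≤ t → HasDerivAt V (-((V t).comp (B t))) t)
    (p : ℝ) (hp : 1 < p)
    (α β : ℝ → ℝ) (hβc : Continuous β)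
    (hα0 : ∀ t, 0 ≤ α t)
    (T : ℝ≥0∞)
    (u G f : ℝ → X) (u₀ : X) (hu0 : u 0 = u₀)
    (hGc : ContinuousOn G {t : ℝ | 0 ≤ t ∧ ENNReal.ofReal t < T})
    (hfc : ContinuousOn f {t : ℝ | 0 ≤ t ∧ ENNReal.ofReal t < T})
    (hud : ∀ t, 0 ≤ t → ENNReal.ofReal t < T → HasDerivAt u (B t (u t) + G t + f t) t)
    (hGb : ∀ t, 0 ≤ t → ENNReal.ofReal t < T → ‖G t‖ ≤ α t * ‖u t‖ ^ p)
    (hfb : ∀ t, 0 ≤ t → ENNReal.ofReal t < T → ‖f t‖ ≤ β t)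
    (hu₀ : u₀ ≠ 0) (κ : ℝ) (hκ : 0 < κ)
    (ζ : ℝ → ℝ)
    (hζ : ∀ t, ζ t = ‖U t‖ * ‖u₀‖ + ∫ ξ in (0:ℝ)..t, ‖(U t).comp (V ξ)‖ * β ξ)
    (hκβ : ∀ t, 0 ≤ t → α t * ((κ + 1) * ζ t) ^ p ≤ κ * β t) :
    ∀ t, 0 ≤ t → ENNReal.ofReal t < T → ‖u t‖ < (κ + 1) * ζ t := by
  intro t ht htT
  have hdom : Icc 0 t ⊆ {s | 0 ≤ s ∧ ENNReal.ofReal s < T} := fun s hs =>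
    ⟨hs.1, (ENNReal.ofReal_le_ofReal hs.2).trans_lt htT⟩
  have hUc : ContinuousOn U (Ici 0) := fun s hs => (hUd s hs).continuousAt.continuousWithinAt
  have hVc : ContinuousOn V (Ici 0) := fun s hs => (hVd s hs).continuousAt.continuousWithinAt
  have hζc : ContinuousOn ζ (Icc 0 t) :=
    (((hUc.norm.mul continuousOn_const).add (hUc.intervalIntegral_norm_comp_mul hVc
      hβc.continuousOn)).mono Icc_subset_Ici_self).congr fun s _ => hζ s
  have huc : ContinuousOn u (Icc 0 t) := fun s hs =>
    (hud s hs.1 (hdom hs).2).continuousAt.continuousWithinAt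
  refine sub_pos.1 (ContinuousOn.pos_of_pos_on_Ico (g := fun s => (κ + 1) * ζ s - ‖u s‖)
    ((continuousOn_const.mul hζc).sub huc.norm) (fun s hs hbefore => ?_) t ⟨ht, le_rfl⟩)
  have hsdom : Icc 0 s ⊆ {s | 0 ≤ s ∧ ENNReal.ofReal s < T} :=
    (Icc_subset_Icc_right hs.2).trans hdom
  have hGf : ∀ ξ ∈ Ioo 0 s, ‖G ξ + f ξ‖ ≤ (κ + 1) * β ξ := fun ξ hξ =>
    have hξdom := hsdom (Ioo_subset_Icc_self hξ)
    norm_add_le_of_absorb (by linarith) (hα0 ξ) (hGb ξ hξ.1.le hξdom.2) (hfb ξ hξ.1.le hξdom.2)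
      (by linarith [hbefore ξ ⟨hξ.1.le, hξ.2⟩]) (hκβ ξ hξ.1.le)
  have hest := norm_le_duhamel hs.1 hV0 (hUV s hs.1) (fun ξ hξ => hVd ξ hξ.1)
    (fun ξ hξ => by simpa only [add_assoc, Pi.add_apply] using hud ξ hξ.1 (hsdom hξ).2)
    ((hGc.add hfc).mono hsdom) (c := fun ξ => (κ + 1) * β ξ) (by fun_prop) hGf
  simp only [mul_left_comm _ (κ + 1), intervalIntegral.integral_const_mul, hu0] at hest
  have : Nontrivial X := ⟨u₀, 0, hu₀⟩
  have hUs : 0 < ‖U s‖ := norm_pos_iff.2 fun h => by simpa [h] using hVU s hs.1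
  rw [hζ s]
  nlinarith [mul_pos hκ (mul_pos hUs (norm_pos_iff.2 hu₀))]

theorem stmt9
    {X : Type*} [NormedAddCommGroup X] [NormedSpace ℝ X] [CompleteSpace X]
    (B U V : ℝ → X →L[ℝ] X)
    (hB : Continuous B)
    (hU0 : U 0 = 1) (hV0 : V 0 = 1)
    (hVU : ∀ t, 0 ≤ t → (V t).comp (U t) = 1)
    (hUV : ∀ t, 0 ≤ t → (U t).comp (V t) = 1)
    (hUd : ∀ t, 0 ≤ t → HasDerivAt U ((B t).comp (U t)) t)
    (hVd : ∀ t, 0 ≤ t → HasDerivAt V (-((V t).comp (B t))) t)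
    (p : ℝ) (hp : 1 < p)
    (α β : ℝ → ℝ) (hαc : Continuous α) (hβc : Continuous β)
    (hα0 : ∀ t, 0 ≤ α t) (hβ0 : ∀ t, 0 ≤ β t)
    (T : ℝ≥0∞) (hT : 0 < T)
    (u G f : ℝ → X) (u₀ : X) (hu0 : u 0 = u₀)
    (hGc : ContinuousOn G {t : ℝ | 0 ≤ t ∧ ENNReal.ofReal t < T})
    (hfc : ContinuousOn f {t : ℝ | 0 ≤ t ∧ ENNReal.ofReal t < T})
    (hud : ∀ t, 0 ≤ t → ENNReal.ofReal t < T → HasDerivAt u (B t (u t) + G t + f t) t)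
    (hGb : ∀ t, 0 ≤ t → ENNReal.ofReal t < T → ‖G t‖ ≤ α t * ‖u t‖ ^ p)
    (hfb : ∀ t, 0 ≤ t → ENNReal.ofReal t < T → ‖f t‖ ≤ β t)
    (hu₀ : u₀ ≠ 0) (κ : ℝ) (hκ : 0 < κ)
    (ζ : ℝ → ℝ)
    (hζ : ∀ t, ζ t = ‖U t‖ * ‖u₀‖ + ∫ ξ in (0:ℝ)..t, ‖(U t).comp (V ξ)‖ * β ξ)
    (hκβ : ∀ t, 0 ≤ t → α t * ((κ + 1) * ζ t) ^ p ≤ κ * β t) :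
    ∀ t, 0 ≤ t → ENNReal.ofReal t < T → ‖u t‖ < (κ + 1) * ζ t :=
  stmt9_general B U V hV0 hVU hUV hUd hVd p hp α β hβc hα0 T u G f u₀ hu0 hGc hfc hud hGb hfb hu₀ κ
    hκ ζ hζ hκβ
end

section
/- (Corollary of Theorem 2.4.) Under the propagator setup and the solution setup with T = ∞, assume u₀ ≠ 0, let κ > 0, define ζ(t) := ‖U(t)‖·‖u₀‖ + ∫₀ᵗ ‖U(t)∘V(ξ)‖·β(ξ) dξ, and assume α(t)·((κ+1)·ζ(t))^p ≤ κ·β(t) for all t ≥ 0. If sup_{t≥0} ‖U(t)‖ < ∞ and sup_{t≥0} ∫₀ᵗ ‖U(t)∘V(ξ)‖·β(ξ) dξ < ∞, then sup_{t≥0} ‖u(t)‖ < ∞. If moreover ‖U(t)‖ → 0 and ∫₀ᵗ ‖U(t)∘V(ξ)‖·β(ξ) dξ → 0 as t → ∞, then u(t) → 0 as t → ∞. -/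
/-!
By Duhamel's formula `u t = U t u₀ + ∫₀ᵗ U t (V ξ (G ξ + f ξ)) dξ`, the norm `‖u t‖` is bounded by
`‖U t‖ ‖u₀‖` plus a Volterra integral of `α ‖u‖ ^ p + β` against the kernel `‖U t ∘ V ξ‖`.
As long as `α ‖u‖ ^ p ≤ κ β` holds on `[0, s)`, this gives `‖u s‖ ≤ (κ + 1) ζ s`, which by the
hypothesis on `α` restores `α ‖u‖ ^ p ≤ κ β` at `s`. Since `u₀ ≠ 0`, the term `κ ‖U t‖ ‖u₀‖` of
`(κ + 1) ζ t` is strictly positive and absorbs the contribution of a short interval past `s`, so a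
continuity argument propagates the inequality to all times. Both conclusions then follow from
`‖u t‖ ≤ (κ + 1) ζ t`.
-/

open MeasureTheory Filter Set Topology

theorem forall_nonneg_of_eventually_nhdsGE {P : ℝ → Prop}
    (h : ∀ s, 0 ≤ s → (∀ ξ ∈ Ico 0 s, P ξ) → ∀ᶠ b in 𝓝[≥] s, P b) :
    ∀ t, 0 ≤ t → P t := by
  by_contra! ⟨t, ht, hPt⟩
  set bad := {b | 0 ≤ b ∧ ¬ P b}
  have hne : bad.Nonempty := ⟨t, ht, hPt⟩
  have hbdd : BddBelow bad := ⟨0, fun b hb => hb.1⟩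
  have hs : 0 ≤ sInf bad := le_csInf hne fun b hb => hb.1
  have hbelow : ∀ ξ ∈ Ico 0 (sInf bad), P ξ := fun ξ hξ =>
    by_contra fun hP => (csInf_le hbdd ⟨hξ.1, hP⟩).not_gt hξ.2
  obtain ⟨c, hsc, hc⟩ := mem_nhdsGE_iff_exists_Ico_subset.1 (h _ hs hbelow)
  obtain ⟨b, hb, hbc⟩ := exists_lt_of_csInf_lt hne hsc
  exact hb.2 (hc ⟨csInf_le hbdd hb, hbc⟩)

theorem tendsto_intervalIntegral_nhdsGE {E : Type*} [NormedAddCommGroup E] [NormedSpace ℝ E]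
    {F : ℝ → ℝ → E} {s : ℝ}
    (hF : ContinuousOn (Function.uncurry F) (Icc s (s + 1) ×ˢ Icc s (s + 1))) :
    Tendsto (fun b => ∫ ξ in s..b, F b ξ) (𝓝[≥] s) (𝓝 0) := by
  obtain ⟨M, hM⟩ := (isCompact_Icc.prod isCompact_Icc).exists_bound_of_continuousOn hF
  have hlim : Tendsto (fun b => M * |b - s|) (𝓝[≥] s) (𝓝 0) := by
    have : Tendsto (fun b => M * |b - s|) (𝓝 s) (𝓝 (M * |s - s|)) :=
      (continuous_const.mul (continuous_id.sub continuous_const).abs).tendsto s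
    simpa using this.mono_left nhdsWithin_le_nhds
  refine squeeze_zero_norm' ?_ hlim
  filter_upwards [Icc_mem_nhdsGE (by linarith : s < s + 1)] with b hb
  refine intervalIntegral.norm_integral_le_of_norm_le_const fun ξ hξ => hM (b, ξ) ⟨hb, ?_⟩
  rw [uIoc_of_le hb.1] at hξ
  exact ⟨hξ.1.le, hξ.2.trans hb.2⟩

section VolterraBootstrap

variable {N : ℝ → ℝ → ℝ} {y a w β : ℝ → ℝ} {κ : ℝ}

theorem intervalIntegrable_kernel_mul (hN : ContinuousOn (Function.uncurry N) (Ici 0 ×ˢ Ici 0))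
    {g : ℝ → ℝ} (hg : ContinuousOn g (Ici 0)) {t : ℝ} (ht : 0 ≤ t) {c d : ℝ}
    (hc : 0 ≤ c) (hd : 0 ≤ d) :
    IntervalIntegrable (fun ξ => N t ξ * g ξ) volume c d := by
  have hsub : uIcc c d ⊆ Ici 0 := fun ξ hξ => (le_min hc hd).trans hξ.1
  refine ContinuousOn.intervalIntegrable (ContinuousOn.mul ?_ (hg.mono hsub))
  exact hN.comp (continuousOn_const.prodMk continuousOn_id) fun ξ hξ => ⟨ht, hsub hξ⟩

variable (hN0 : ∀ t ξ, 0 ≤ N t ξ) (hβ0 : ∀ ξ, 0 ≤ β ξ)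
  (hN : ContinuousOn (Function.uncurry N) (Ici 0 ×ˢ Ici 0))
  (hwc : ContinuousOn w (Ici 0)) (hβc : ContinuousOn β (Ici 0))
  (hy : ∀ t, 0 ≤ t → y t ≤ a t + ∫ ξ in (0:ℝ)..t, N t ξ * (w ξ + β ξ))

include hN0 hβ0 hN hwc hβc hy in
theorem le_of_dominated_on_Ico (hκ : 0 ≤ κ) {s b : ℝ} (hs : 0 ≤ s) (hsb : s ≤ b)
    (hQ : ∀ ξ ∈ Ico 0 s, w ξ ≤ κ * β ξ)
    (htail : ∫ ξ in s..b, N b ξ * w ξ ≤ κ * a b) :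
    y b ≤ (κ + 1) * (a b + ∫ ξ in (0:ℝ)..b, N b ξ * β ξ) := by
  have hb : 0 ≤ b := hs.trans hsb
  have hiw := fun {c d : ℝ} => intervalIntegrable_kernel_mul hN hwc hb (c := c) (d := d)
  have hiβ := fun {c d : ℝ} => intervalIntegrable_kernel_mul hN hβc hb (c := c) (d := d)
  have hsplit : ∫ ξ in (0:ℝ)..b, N b ξ * (w ξ + β ξ) = (∫ ξ in (0:ℝ)..s, N b ξ * w ξ) +
      (∫ ξ in s..b, N b ξ * w ξ) + ∫ ξ in (0:ℝ)..b, N b ξ * β ξ := by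
    simp only [mul_add]
    rw [intervalIntegral.integral_add (hiw le_rfl hb) (hiβ le_rfl hb),
      intervalIntegral.integral_add_adjacent_intervals (hiw le_rfl hs) (hiw hs hb)]
  have hbefore : ∫ ξ in (0:ℝ)..s, N b ξ * w ξ ≤ κ * ∫ ξ in (0:ℝ)..s, N b ξ * β ξ := by
    rw [← intervalIntegral.integral_const_mul]
    refine intervalIntegral.integral_mono_on_of_le_Ioo hs (hiw le_rfl hs)
      ((hiβ le_rfl hs).const_mul κ) fun ξ hξ => ?_
    rw [mul_left_comm]
    exact mul_le_mul_of_nonneg_left (hQ ξ (Ioo_subset_Ico_self hξ)) (hN0 b ξ)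
  have hmono : ∫ ξ in (0:ℝ)..s, N b ξ * β ξ ≤ ∫ ξ in (0:ℝ)..b, N b ξ * β ξ :=
    intervalIntegral.integral_mono_interval le_rfl hs hsb
      (ae_of_all _ fun ξ => mul_nonneg (hN0 b ξ) (hβ0 ξ)) (hiβ le_rfl hb)
  have := hy b hb
  nlinarith

include hN0 hβ0 hN hwc hβc hy in
theorem le_of_volterra_bootstrap (hκ : 0 < κ)
    (ha : ContinuousOn a (Ici 0)) (ha0 : ∀ t, 0 ≤ t → 0 < a t)
    (hw : ∀ t, 0 ≤ t → y t ≤ (κ + 1) * (a t + ∫ ξ in (0:ℝ)..t, N t ξ * β ξ) → w t ≤ κ * β t)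
    {t : ℝ} (ht : 0 ≤ t) :
    y t ≤ (κ + 1) * (a t + ∫ ξ in (0:ℝ)..t, N t ξ * β ξ) := by
  have hQ : ∀ t, 0 ≤ t → w t ≤ κ * β t := by
    refine forall_nonneg_of_eventually_nhdsGE fun s hs hQ => ?_
    have hF : ContinuousOn (Function.uncurry fun b ξ => N b ξ * w ξ)
        (Icc s (s + 1) ×ˢ Icc s (s + 1)) := by
      have hsub : Icc s (s + 1) ⊆ Ici 0 := fun ξ hξ => hs.trans hξ.1
      exact (hN.mono (prod_mono hsub hsub)).mul (hwc.comp continuousOn_snd fun x hx => hsub hx.2)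
    -- `a s > 0` leaves room to absorb the integral over `[s, b]` for `b` close to `s`.
    have ha_near : ∀ᶠ b in 𝓝[≥] s, a s / 2 < a b :=
      ((ha.continuousWithinAt hs).mono_of_mem_nhdsWithin
        (mem_of_superset self_mem_nhdsWithin (Ici_subset_Ici.2 hs))).eventually
          (lt_mem_nhds (half_lt_self (ha0 s hs)))
    have htail : ∀ᶠ b in 𝓝[≥] s, ∫ ξ in s..b, N b ξ * w ξ < κ * (a s / 2) :=
      (tendsto_intervalIntegral_nhdsGE hF).eventually
        (gt_mem_nhds (mul_pos hκ (half_pos (ha0 s hs))))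
    filter_upwards [ha_near, htail, self_mem_nhdsWithin] with b hab htailb hsb
    refine hw b (hs.trans hsb) (le_of_dominated_on_Ico hN0 hβ0 hN hwc hβc hy hκ.le hs hsb hQ ?_)
    nlinarith
  exact le_of_dominated_on_Ico hN0 hβ0 hN hwc hβc hy hκ.le ht le_rfl (fun ξ hξ => hQ ξ hξ.1)
    (by simpa using mul_nonneg hκ.le (ha0 t ht).le)

end VolterraBootstrap

section Propagator

variable {X : Type*} [NormedAddCommGroup X] [NormedSpace ℝ X] [CompleteSpace X]
  {B U V : ℝ → X →L[ℝ] X} {u F : ℝ → X} {t : ℝ}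

theorem duhamel_formula_s10 (hUV : (U t).comp (V t) = 1) (hV0 : V 0 = 1)
    (hVd : ∀ ξ ∈ uIcc 0 t, HasDerivAt V (-((V ξ).comp (B ξ))) ξ)
    (hud : ∀ ξ ∈ uIcc 0 t, HasDerivAt u (B ξ (u ξ) + F ξ) ξ)
    (hF : IntervalIntegrable (fun ξ => V ξ (F ξ)) volume 0 t) :
    u t = U t (u 0) + ∫ ξ in (0:ℝ)..t, U t (V ξ (F ξ)) := by
  have hderiv : ∀ ξ ∈ uIcc 0 t, HasDerivAt (fun τ => V τ (u τ)) (V ξ (F ξ)) ξ := by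
    intro ξ hξ
    convert (hVd ξ hξ).clm_apply (hud ξ hξ) using 1
    simp only [neg_apply, ContinuousLinearMap.comp_apply, map_add]
    abel
  have hVu : V t (u t) = u 0 + ∫ ξ in (0:ℝ)..t, V ξ (F ξ) := by
    rw [intervalIntegral.integral_eq_sub_of_hasDerivAt hderiv hF, hV0]
    simp
  calc u t = ((U t).comp (V t)) (u t) := by rw [hUV]; rfl
    _ = U t (u 0) + ∫ ξ in (0:ℝ)..t, U t (V ξ (F ξ)) := by
      rw [ContinuousLinearMap.comp_apply, hVu, map_add,
        ContinuousLinearMap.intervalIntegral_comp_comm _ hF]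

theorem norm_le_duhamel_s10 {g : ℝ → ℝ} (ht : 0 ≤ t) (hUV : (U t).comp (V t) = 1) (hV0 : V 0 = 1)
    (hVd : ∀ ξ ∈ Icc 0 t, HasDerivAt V (-((V ξ).comp (B ξ))) ξ)
    (hud : ∀ ξ ∈ Icc 0 t, HasDerivAt u (B ξ (u ξ) + F ξ) ξ)
    (hFc : ContinuousOn F (Icc 0 t)) (hgc : ContinuousOn g (Icc 0 t))
    (hFg : ∀ ξ ∈ Icc 0 t, ‖F ξ‖ ≤ g ξ) :
    ‖u t‖ ≤ ‖U t‖ * ‖u 0‖ + ∫ ξ in (0:ℝ)..t, ‖(U t).comp (V ξ)‖ * g ξ := by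
  rw [← uIcc_of_le ht] at hVd hud hFc hgc hFg
  have hVc : ContinuousOn V (uIcc 0 t) := fun ξ hξ => (hVd ξ hξ).continuousAt.continuousWithinAt
  have hVFc : ContinuousOn (fun ξ => V ξ (F ξ)) (uIcc 0 t) := hVc.clm_apply hFc
  rw [duhamel_formula_s10 hUV hV0 hVd hud hVFc.intervalIntegrable]
  refine (norm_add_le _ _).trans (add_le_add ((U t).le_opNorm _) ?_)
  refine (intervalIntegral.norm_integral_le_integral_norm ht).trans ?_
  refine intervalIntegral.integral_mono_on ht
    (((U t).continuous.comp_continuousOn hVFc).norm.intervalIntegrable)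
    ((((ContinuousLinearMap.compL ℝ X X X (U t)).continuous.comp_continuousOn hVc).norm.mul
      hgc).intervalIntegrable) fun ξ hξ => ?_
  rw [← uIcc_of_le ht] at hξ
  calc ‖U t (V ξ (F ξ))‖ = ‖((U t).comp (V ξ)) (F ξ)‖ := rfl
    _ ≤ ‖(U t).comp (V ξ)‖ * ‖F ξ‖ := ContinuousLinearMap.le_opNorm _ _
    _ ≤ ‖(U t).comp (V ξ)‖ * g ξ := mul_le_mul_of_nonneg_left (hFg ξ hξ) (norm_nonneg _)

theorem norm_le_of_propagator_bootstrap {w β : ℝ → ℝ} {κ : ℝ} (hκ : 0 < κ) (hV0 : V 0 = 1)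
    (hUV : ∀ t, 0 ≤ t → (U t).comp (V t) = 1)
    (hUd : ∀ t, 0 ≤ t → HasDerivAt U ((B t).comp (U t)) t)
    (hVd : ∀ t, 0 ≤ t → HasDerivAt V (-((V t).comp (B t))) t)
    (hud : ∀ t, 0 ≤ t → HasDerivAt u (B t (u t) + F t) t) (hu0 : u 0 ≠ 0)
    (hFc : ContinuousOn F (Ici 0)) (hwc : ContinuousOn w (Ici 0)) (hβc : ContinuousOn β (Ici 0))
    (hβ0 : ∀ ξ, 0 ≤ β ξ) (hFb : ∀ t, 0 ≤ t → ‖F t‖ ≤ w t + β t)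
    (hw : ∀ t, 0 ≤ t →
      ‖u t‖ ≤ (κ + 1) * (‖U t‖ * ‖u 0‖ + ∫ ξ in (0:ℝ)..t, ‖(U t).comp (V ξ)‖ * β ξ) →
        w t ≤ κ * β t)
    (ht : 0 ≤ t) :
    ‖u t‖ ≤ (κ + 1) * (‖U t‖ * ‖u 0‖ + ∫ ξ in (0:ℝ)..t, ‖(U t).comp (V ξ)‖ * β ξ) := by
  have : Nontrivial X := ⟨⟨u 0, 0, hu0⟩⟩
  have hUc : ContinuousOn U (Ici 0) := fun t ht => (hUd t ht).continuousAt.continuousWithinAt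
  have hVc : ContinuousOn V (Ici 0) := fun t ht => (hVd t ht).continuousAt.continuousWithinAt
  have hU_ne : ∀ t, 0 ≤ t → U t ≠ 0 := fun t ht hU =>
    one_ne_zero (by rw [← hUV t ht, hU, ContinuousLinearMap.zero_comp])
  refine le_of_volterra_bootstrap (N := fun b ξ => ‖(U b).comp (V ξ)‖) (y := fun t => ‖u t‖)
    (a := fun t => ‖U t‖ * ‖u 0‖) (fun _ _ => norm_nonneg _) hβ0
    ((hUc.comp continuousOn_fst fun x hx => hx.1).clm_comp
      (hVc.comp continuousOn_snd fun x hx => hx.2)).norm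
    hwc hβc (fun s hs => ?_) hκ (hUc.norm.mul continuousOn_const)
    (fun s hs => mul_pos (norm_pos_iff.2 (hU_ne s hs)) (norm_pos_iff.2 hu0)) hw ht
  exact norm_le_duhamel_s10 hs (hUV s hs) hV0 (fun ξ hξ => hVd ξ hξ.1) (fun ξ hξ => hud ξ hξ.1)
    (hFc.mono Icc_subset_Ici_self) ((hwc.add hβc).mono Icc_subset_Ici_self)
    fun ξ hξ => hFb ξ hξ.1

end Propagator

theorem stmt10_general
    {X : Type*} [NormedAddCommGroup X] [NormedSpace ℝ X] [CompleteSpace X]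
    (B U V : ℝ → X →L[ℝ] X)
    (hV0 : V 0 = 1)
    (hUV : ∀ t, 0 ≤ t → (U t).comp (V t) = 1)
    (hUd : ∀ t, 0 ≤ t → HasDerivAt U ((B t).comp (U t)) t)
    (hVd : ∀ t, 0 ≤ t → HasDerivAt V (-((V t).comp (B t))) t)
    (p : ℝ) (hp : 1 < p)
    (α β : ℝ → ℝ) (hαc : Continuous α) (hβc : Continuous β)
    (hα0 : ∀ t, 0 ≤ α t) (hβ0 : ∀ t, 0 ≤ β t)
    (u G f : ℝ → X) (u₀ : X) (hu0 : u 0 = u₀)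
    (hGc : ContinuousOn G (Set.Ici 0))
    (hfc : ContinuousOn f (Set.Ici 0))
    (hud : ∀ t, 0 ≤ t → HasDerivAt u (B t (u t) + G t + f t) t)
    (hGb : ∀ t, 0 ≤ t → ‖G t‖ ≤ α t * ‖u t‖ ^ p)
    (hfb : ∀ t, 0 ≤ t → ‖f t‖ ≤ β t)
    (hu₀ : u₀ ≠ 0) (κ : ℝ) (hκ : 0 < κ)
    (ζ : ℝ → ℝ)
    (hζ : ∀ t, ζ t = ‖U t‖ * ‖u₀‖ + ∫ ξ in (0:ℝ)..t, ‖(U t).comp (V ξ)‖ * β ξ)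
    (hκβ : ∀ t, 0 ≤ t → α t * ((κ + 1) * ζ t) ^ p ≤ κ * β t)
    (hUbd : ∃ C, ∀ t, 0 ≤ t → ‖U t‖ ≤ C)
    (hIbd : ∃ C, ∀ t, 0 ≤ t → ∫ ξ in (0:ℝ)..t, ‖(U t).comp (V ξ)‖ * β ξ ≤ C) :
    (∃ C, ∀ t, 0 ≤ t → ‖u t‖ ≤ C) ∧
    (Tendsto (fun t => ‖U t‖) atTop (nhds 0) →
     Tendsto (fun t => ∫ ξ in (0:ℝ)..t, ‖(U t).comp (V ξ)‖ * β ξ) atTop (nhds 0) →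
     Tendsto u atTop (nhds 0)) := by
  have hwc : ContinuousOn (fun ξ => α ξ * ‖u ξ‖ ^ p) (Ici 0) :=
    hαc.continuousOn.mul (ContinuousOn.rpow_const
      (fun t ht => (hud t ht).continuousAt.norm.continuousWithinAt) fun _ _ => Or.inr (by linarith))
  have hbound : ∀ t, 0 ≤ t → ‖u t‖ ≤ (κ + 1) * ζ t := by
    intro t ht
    rw [hζ, ← hu0]
    refine norm_le_of_propagator_bootstrap (F := G + f) hκ hV0 hUV hUd hVd
      (fun s hs => by rw [Pi.add_apply, ← add_assoc]; exact hud s hs) (hu0 ▸ hu₀)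
      (hGc.add hfc) hwc hβc.continuousOn hβ0
      (fun s hs => (norm_add_le _ _).trans (add_le_add (hGb s hs) (hfb s hs)))
      (fun s hs hle => ?_) ht
    rw [hu0, ← hζ] at hle
    exact (mul_le_mul_of_nonneg_left (Real.rpow_le_rpow (norm_nonneg _) hle (by linarith))
      (hα0 s)).trans (hκβ s hs)
  refine ⟨?_, fun hUlim hIlim => ?_⟩
  · obtain ⟨C₁, hC₁⟩ := hUbd
    obtain ⟨C₂, hC₂⟩ := hIbd
    refine ⟨(κ + 1) * (C₁ * ‖u₀‖ + C₂), fun t ht => (hbound t ht).trans ?_⟩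
    rw [hζ]
    gcongr
    exacts [hC₁ t ht, hC₂ t ht]
  · have hζlim : Tendsto ζ atTop (𝓝 0) := by
      simpa [funext hζ] using (hUlim.mul_const ‖u₀‖).add hIlim
    refine tendsto_zero_iff_norm_tendsto_zero.2 (squeeze_zero' (.of_forall fun t => norm_nonneg _)
      ?_ (by simpa using hζlim.const_mul (κ + 1)))
    filter_upwards [eventually_ge_atTop 0] with t ht using hbound t ht

theorem stmt10
    {X : Type*} [NormedAddCommGroup X] [NormedSpace ℝ X] [CompleteSpace X]
    (B U V : ℝ → X →L[ℝ] X)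
    (hB : Continuous B)
    (hU0 : U 0 = 1) (hV0 : V 0 = 1)
    (hVU : ∀ t, 0 ≤ t → (V t).comp (U t) = 1)
    (hUV : ∀ t, 0 ≤ t → (U t).comp (V t) = 1)
    (hUd : ∀ t, 0 ≤ t → HasDerivAt U ((B t).comp (U t)) t)
    (hVd : ∀ t, 0 ≤ t → HasDerivAt V (-((V t).comp (B t))) t)
    (p : ℝ) (hp : 1 < p)
    (α β : ℝ → ℝ) (hαc : Continuous α) (hβc : Continuous β)
    (hα0 : ∀ t, 0 ≤ α t) (hβ0 : ∀ t, 0 ≤ β t)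
    (u G f : ℝ → X) (u₀ : X) (hu0 : u 0 = u₀)
    (hGc : ContinuousOn G (Set.Ici 0))
    (hfc : ContinuousOn f (Set.Ici 0))
    (hud : ∀ t, 0 ≤ t → HasDerivAt u (B t (u t) + G t + f t) t)
    (hGb : ∀ t, 0 ≤ t → ‖G t‖ ≤ α t * ‖u t‖ ^ p)
    (hfb : ∀ t, 0 ≤ t → ‖f t‖ ≤ β t)
    (hu₀ : u₀ ≠ 0) (κ : ℝ) (hκ : 0 < κ)
    (ζ : ℝ → ℝ)
    (hζ : ∀ t, ζ t = ‖U t‖ * ‖u₀‖ + ∫ ξ in (0:ℝ)..t, ‖(U t).comp (V ξ)‖ * β ξ)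
    (hκβ : ∀ t, 0 ≤ t → α t * ((κ + 1) * ζ t) ^ p ≤ κ * β t)
    (hUbd : ∃ C, ∀ t, 0 ≤ t → ‖U t‖ ≤ C)
    (hIbd : ∃ C, ∀ t, 0 ≤ t → ∫ ξ in (0:ℝ)..t, ‖(U t).comp (V ξ)‖ * β ξ ≤ C) :
    (∃ C, ∀ t, 0 ≤ t → ‖u t‖ ≤ C) ∧
    (Tendsto (fun t => ‖U t‖) atTop (nhds 0) →
     Tendsto (fun t => ∫ ξ in (0:ℝ)..t, ‖(U t).comp (V ξ)‖ * β ξ) atTop (nhds 0) →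
     Tendsto u atTop (nhds 0)) :=
  stmt10_general B U V hV0 hUV hUd hVd p hp α β hαc hβc hα0 hβ0 u G f u₀ hu0 hGc hfc hud hGb hfb hu₀
    κ hκ ζ hζ hκβ hUbd hIbd
end

section
/- (Key inequality in Hilbert space, inequality (32) of Section 3.) Under the Hilbert propagator setup and the Hilbert solution setup, for every t ∈ [0,T): ‖V(t)(u(t))‖ ≤ ‖u₀‖ + ∫₀ᵗ ‖V(ξ)‖·(α(ξ)·‖u(ξ)‖^p + β(ξ)) dξ. -/
/-!
Put `v t = V t (u t)`. Since `V' = -V B`, the generator cancels and `v' = V (w + G + f)`.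
Then `(‖v‖²)' = 2 Re⟪v, v'⟫ ≤ 2 ‖v‖ ‖V‖ (α ‖u‖ ^ p + β)`, because `Re⟪V w, v⟫ ≤ 0`, so
`‖v‖' ≤ ‖V‖ (α ‖u‖ ^ p + β)`; at a zero of `v` the function `‖v‖` has a minimum, so its
derivative vanishes there. Integrating from `0`, where `v 0 = u₀`, gives the bound.
-/

open MeasureTheory Filter
open scoped ENNReal

section

variable {𝕜 : Type*} [NontriviallyNormedField 𝕜] [NormedAlgebra ℝ 𝕜]
  {E F : Type*} [NormedAddCommGroup E] [NormedSpace 𝕜 E] [NormedSpace ℝ E] [IsScalarTower ℝ 𝕜 E]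
  [NormedAddCommGroup F] [NormedSpace 𝕜 F] [NormedSpace ℝ F] [IsScalarTower ℝ 𝕜 F]

theorem HasDerivAt.clm_apply_of_isScalarTower {c : ℝ → E →L[𝕜] F} {c' : E →L[𝕜] F}
    {u : ℝ → E} {u' : E} {x : ℝ} (hc : HasDerivAt c c' x) (hu : HasDerivAt u u' x) :
    HasDerivAt (fun y => c y (u y)) (c' (u x) + c x u') x :=
  ((ContinuousLinearMap.restrictScalarsL 𝕜 E F ℝ ℝ).hasFDerivAt.comp_hasDerivAt x hc).clm_apply hu

theorem HasDerivAt.clm_apply_cancel_generator {c : ℝ → E →L[𝕜] F} {b : E →L[𝕜] E}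
    {u : ℝ → E} {r : E} {x : ℝ} (hc : HasDerivAt c (-((c x).comp b)) x)
    (hu : HasDerivAt u (b (u x) + r) x) :
    HasDerivAt (fun y => c y (u y)) (c x r) x := by
  simpa using hc.clm_apply_of_isScalarTower hu

end

section

variable {𝕜 E : Type*} [RCLike 𝕜] [NormedAddCommGroup E] [InnerProductSpace 𝕜 E]

local notation "⟪" x ", " y "⟫" => inner 𝕜 x y

theorem re_inner_add_le_of_re_inner_nonpos {x y z : E} (h : RCLike.re ⟪y, x⟫ ≤ 0) :
    RCLike.re ⟪x, y + z⟫ ≤ ‖x‖ * ‖z‖ := by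
  rw [inner_add_right, map_add, inner_re_symm (𝕜 := 𝕜)]
  linarith [re_inner_le_norm (𝕜 := 𝕜) x z]

variable [NormedSpace ℝ E]

theorem le_of_hasDerivAt_norm {v : ℝ → E} {v' : E} {n c t : ℝ} (hv : HasDerivAt v v' t)
    (hn : HasDerivAt (fun s => ‖v s‖) n t) (hc : 0 ≤ c)
    (hre : RCLike.re ⟪v t, v'⟫ ≤ ‖v t‖ * c) : n ≤ c := by
  rcases (norm_nonneg (v t)).eq_or_lt with hzero | hpos
  · have hmin : IsLocalMin (fun s => ‖v s‖) t :=
      Eventually.of_forall fun s => hzero.symm.trans_le (norm_nonneg (v s))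
    rw [hmin.hasDerivAt_eq_zero hn]
    exact hc
  · have hsq : HasDerivAt (fun s => ‖v s‖ * ‖v s‖) (RCLike.re (⟪v t, v'⟫ + ⟪v', v t⟫)) t := by
      simpa only [Function.comp_def, RCLike.reCLM_apply, inner_self_eq_norm_mul_norm] using
        (RCLike.reCLM (K := 𝕜)).hasFDerivAt.comp_hasDerivAt t (hv.inner 𝕜 hv)
    have hderiv : n * ‖v t‖ + ‖v t‖ * n = 2 * RCLike.re ⟪v t, v'⟫ := by
      rw [(hn.mul hn).unique hsq, map_add, inner_re_symm v']
      ring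
    nlinarith

variable [IsScalarTower ℝ 𝕜 E]

theorem deriv_norm_clm_apply_le {B V : ℝ → E →L[𝕜] E} {u : ℝ → E} {w g f : E} {a b s : ℝ}
    (hV : HasDerivAt V (-((V s).comp (B s))) s) (hu : HasDerivAt u (B s (u s) + w + g + f) s)
    (hw : RCLike.re ⟪V s w, V s (u s)⟫ ≤ 0) (hg : ‖g‖ ≤ a) (hf : ‖f‖ ≤ b)
    (hn : DifferentiableAt ℝ (fun r => ‖V r (u r)‖) s) :
    deriv (fun r => ‖V r (u r)‖) s ≤ ‖V s‖ * (a + b) := by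
  have hv : HasDerivAt (fun r => V r (u r)) (V s (w + (g + f))) s :=
    hV.clm_apply_cancel_generator (by simpa only [add_assoc] using hu)
  have hgf : ‖g + f‖ ≤ a + b := norm_add_le_of_le hg hf
  refine le_of_hasDerivAt_norm (𝕜 := 𝕜) hv hn.hasDerivAt
    (mul_nonneg (norm_nonneg _) ((norm_nonneg _).trans hgf)) ?_
  calc RCLike.re ⟪V s (u s), V s (w + (g + f))⟫
      ≤ ‖V s (u s)‖ * ‖V s (g + f)‖ := by
        rw [map_add]
        exact re_inner_add_le_of_re_inner_nonpos (𝕜 := 𝕜) hw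
    _ ≤ ‖V s (u s)‖ * (‖V s‖ * (a + b)) := by
        gcongr
        exact (V s).le_opNorm_of_le hgf

end

theorem stmt11_general
    {H : Type*} [NormedAddCommGroup H] [InnerProductSpace ℂ H]
    (B V : ℝ → H →L[ℂ] H)
    (hV0 : V 0 = 1)
    (hVd : ∀ t, 0 ≤ t → HasDerivAt V (-((V t).comp (B t))) t)
    (p : ℝ) (hp : 1 < p)
    (α β : ℝ → ℝ) (hαc : Continuous α) (hβc : Continuous β)
    (T : ℝ≥0∞)
    (u w G f : ℝ → H) (u₀ : H) (hu0 : u 0 = u₀)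
    (hud : ∀ t, 0 ≤ t → ENNReal.ofReal t < T →
      HasDerivAt u (B t (u t) + w t + G t + f t) t)
    (hw : ∀ t, 0 ≤ t → ENNReal.ofReal t < T →
      (inner ℂ (V t (w t)) (V t (u t)) : ℂ).re ≤ 0)
    (hGb : ∀ t, 0 ≤ t → ENNReal.ofReal t < T → ‖G t‖ ≤ α t * ‖u t‖ ^ p)
    (hfb : ∀ t, 0 ≤ t → ENNReal.ofReal t < T → ‖f t‖ ≤ β t)
    (hVud : ∀ t, 0 ≤ t → ENNReal.ofReal t < T →
      DifferentiableAt ℝ (fun s => ‖V s (u s)‖) t)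
    :
    ∀ t, 0 ≤ t → ENNReal.ofReal t < T →
      ‖V t (u t)‖ ≤ ‖u₀‖ + ∫ ξ in (0:ℝ)..t, ‖V ξ‖ * (α ξ * ‖u ξ‖ ^ p + β ξ) := by
  intro t ht htT
  have hmem : ∀ s ∈ Set.Icc 0 t, 0 ≤ s ∧ ENNReal.ofReal s < T := fun s hs =>
    ⟨hs.1, (ENNReal.ofReal_le_ofReal hs.2).trans_lt htT⟩
  have hcont : ContinuousOn (fun ξ => ‖V ξ‖ * (α ξ * ‖u ξ‖ ^ p + β ξ)) (Set.Icc 0 t) := by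
    refine continuousOn_of_forall_continuousAt fun s hs => ?_
    have hu := (hud s (hmem s hs).1 (hmem s hs).2).continuousAt
    exact (hVd s hs.1).continuousAt.norm.mul ((hαc.continuousAt.mul
      (hu.norm.rpow_const (Or.inr (zero_le_one.trans hp.le)))).add hβc.continuousAt)
  have hderiv : ∀ s ∈ Set.Icc 0 t, HasDerivAt (fun r => ‖V r (u r)‖)
      (deriv (fun r => ‖V r (u r)‖) s) s := fun s hs =>
    (hVud s (hmem s hs).1 (hmem s hs).2).hasDerivAt
  have hbound : ∀ s ∈ Set.Icc 0 t,
      deriv (fun r => ‖V r (u r)‖) s ≤ ‖V s‖ * (α s * ‖u s‖ ^ p + β s) := by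
    intro s hs
    obtain ⟨hs0, hsT⟩ := hmem s hs
    exact deriv_norm_clm_apply_le (hVd s hs0) (hud s hs0 hsT) (hw s hs0 hsT)
      (hGb s hs0 hsT) (hfb s hs0 hsT) (hVud s hs0 hsT)
  have key := intervalIntegral.sub_le_integral_of_hasDeriv_right_of_le ht
    (fun s hs => (hderiv s hs).continuousAt.continuousWithinAt)
    (fun s hs => (hderiv s (Set.Ioo_subset_Icc_self hs)).hasDerivWithinAt)
    hcont.integrableOn_Icc (fun s hs => hbound s (Set.Ioo_subset_Icc_self hs))
  simp only [hV0, hu0, one_apply_eq_self] at key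
  linarith

theorem stmt11
    {H : Type*} [NormedAddCommGroup H] [InnerProductSpace ℂ H] [CompleteSpace H]
    (B U V : ℝ → H →L[ℂ] H)
    (hB : Continuous B)
    (hU0 : U 0 = 1) (hV0 : V 0 = 1)
    (hVU : ∀ t, 0 ≤ t → (V t).comp (U t) = 1)
    (hUV : ∀ t, 0 ≤ t → (U t).comp (V t) = 1)
    (hUd : ∀ t, 0 ≤ t → HasDerivAt U ((B t).comp (U t)) t)
    (hVd : ∀ t, 0 ≤ t → HasDerivAt V (-((V t).comp (B t))) t)
    (p : ℝ) (hp : 1 < p)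
    (α β : ℝ → ℝ) (hαc : Continuous α) (hβc : Continuous β)
    (hα0 : ∀ t, 0 ≤ α t) (hβ0 : ∀ t, 0 ≤ β t)
    (T : ℝ≥0∞) (hT : 0 < T)
    (u w G f : ℝ → H) (u₀ : H) (hu0 : u 0 = u₀)
    (hwc : ContinuousOn w {t : ℝ | 0 ≤ t ∧ ENNReal.ofReal t < T})
    (hGc : ContinuousOn G {t : ℝ | 0 ≤ t ∧ ENNReal.ofReal t < T})
    (hfc : ContinuousOn f {t : ℝ | 0 ≤ t ∧ ENNReal.ofReal t < T})
    (hud : ∀ t, 0 ≤ t → ENNReal.ofReal t < T →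
      HasDerivAt u (B t (u t) + w t + G t + f t) t)
    (hw : ∀ t, 0 ≤ t → ENNReal.ofReal t < T →
      (inner ℂ (V t (w t)) (V t (u t)) : ℂ).re ≤ 0)
    (hGb : ∀ t, 0 ≤ t → ENNReal.ofReal t < T → ‖G t‖ ≤ α t * ‖u t‖ ^ p)
    (hfb : ∀ t, 0 ≤ t → ENNReal.ofReal t < T → ‖f t‖ ≤ β t)
    (hVud : ∀ t, 0 ≤ t → ENNReal.ofReal t < T →
      DifferentiableAt ℝ (fun s => ‖V s (u s)‖) t)
    :
    ∀ t, 0 ≤ t → ENNReal.ofReal t < T →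
      ‖V t (u t)‖ ≤ ‖u₀‖ + ∫ ξ in (0:ℝ)..t, ‖V ξ‖ * (α ξ * ‖u ξ‖ ^ p + β ξ) :=
  stmt11_general B V hV0 hVd p hp α β hαc hβc T u w G f u₀ hu0 hud hw hGb hfb hVud
end
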